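/- arXiv:2110.10650 — 9 statements merged into one kernel-verified Lean document; each statement's English description precedes it below -/
import Mathlib

section
/- Let X be a finite set of alternatives. If a choice rule π is represented by a pair (≻, μ), then for every nonempty T ⊆ X and every a ∈ T, the attention frequency of a at T is bounded above by the probability of choosing an element of the weak upper contour set of a: φ_μ(a|T) ≤ π(U_⪰(a)|T). -/
open scoped Classical
open Finset

/-- A choice rule: probabilities are nonnegative on the choice problem, zero off it,
and sum to one over each nonempty choice problem. -/
def IsChoiceRule {α : Type*} [Fintype α] [DecidableEq α]
    (π : α → Finset α → ℝ) : Prop :=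
  ∀ S : Finset α, S.Nonempty →
    (∀ a ∈ S, 0 ≤ π a S) ∧ (∀ a : α, a ∉ S → π a S = 0) ∧ (∑ a ∈ S, π a S = 1)

/-- An attention rule: weights are nonnegative on nonempty subsets of the choice problem,
zero elsewhere, and sum to one over the nonempty subsets. -/
def IsAttentionRule {α : Type*} [Fintype α] [DecidableEq α]
    (μ : Finset α → Finset α → ℝ) : Prop :=
  ∀ S : Finset α, S.Nonempty →
    (∀ T : Finset α, T.Nonempty → T ⊆ S → 0 ≤ μ T S) ∧
    (∀ T : Finset α, ¬(T.Nonempty ∧ T ⊆ S) → μ T S = 0) ∧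
    (∑ T ∈ S.powerset.filter (fun T => T.Nonempty), μ T S = 1)

/-- Attention frequency of alternative `a` in choice problem `S` under attention rule `μ`. -/
noncomputable def attFreq {α : Type*} [Fintype α] [DecidableEq α]
    (μ : Finset α → Finset α → ℝ) (a : α) (S : Finset α) : ℝ :=
  ∑ T ∈ S.powerset.filter (fun T => a ∈ T), μ T S

/-- Attention overload: attention frequency weakly decreases as the choice problem expands. -/
def AttentionOverload {α : Type*} [Fintype α] [DecidableEq α]
    (μ : Finset α → Finset α → ℝ) : Prop :=
  ∀ (a : α) (T S : Finset α), a ∈ T → T ⊆ S → attFreq μ a S ≤ attFreq μ a T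

/-- `a` is the `r`-maximum of `T`. -/
def IsMaxOf {α : Type*} (r : α → α → Prop) (a : α) (T : Finset α) : Prop :=
  a ∈ T ∧ ∀ b ∈ T, b ≠ a → r a b

/-- The choice rule `π` is represented by the preference `r` and the attention rule `μ`. -/
noncomputable def Represents {α : Type*} [Fintype α] [DecidableEq α]
    (r : α → α → Prop) (μ : Finset α → Finset α → ℝ) (π : α → Finset α → ℝ) : Prop :=
  IsAttentionRule μ ∧
  ∀ S : Finset α, S.Nonempty → ∀ a ∈ S,
    π a S = ∑ T ∈ S.powerset, (if IsMaxOf r a T then μ T S else 0)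

/-- `π` is an Attention Overload Model. -/
noncomputable def IsAOM {α : Type*} [Fintype α] [DecidableEq α]
    (π : α → Finset α → ℝ) : Prop :=
  ∃ (r : α → α → Prop) (μ : Finset α → Finset α → ℝ),
    IsStrictTotalOrder α r ∧ AttentionOverload μ ∧ Represents r μ π

/-- `π(U_⪰(a) | T)`: probability of choosing from the weak upper contour set of `a` in `T`. -/
noncomputable def piUpper {α : Type*} [Fintype α] [DecidableEq α]
    (π : α → Finset α → ℝ) (r : α → α → Prop) (a : α) (T : Finset α) : ℝ :=
  ∑ b ∈ T.filter (fun b => r b a ∨ b = a), π b T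

/-- Attention Compensation (AC). -/
noncomputable def SatisfiesAC {α : Type*} [Fintype α] [DecidableEq α]
    (π : α → Finset α → ℝ) (r : α → α → Prop) : Prop :=
  ∀ (a : α) (T S : Finset α), a ∈ T → T ⊆ S → π a S ≤ piUpper π r a T

lemma exists_rmax {α : Type*} (r : α → α → Prop) (hr : IsStrictTotalOrder α r)
    (U : Finset α) (hU : U.Nonempty) : ∃ m ∈ U, ∀ c ∈ U, c ≠ m → r m c := by
  classical
  induction U using Finset.induction_on with
  | empty => exact absurd hU (by simp)
  | @insert x s hx ih =>
    rcases s.eq_empty_or_nonempty with hs | hs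
    · subst hs
      exact ⟨x, by simp, by simp⟩
    · obtain ⟨m, hmU, hm⟩ := ih hs
      rcases (show r x m ∨ x = m ∨ r m x by by_cases h1 : r x m; exact Or.inl h1; by_cases h2 : r m x; exact Or.inr (Or.inr h2); exact Or.inr (Or.inl (hr.trichotomous x m h1 h2))) with h | h | h
      · refine ⟨x, Finset.mem_insert_self _ _, ?_⟩
        intro c hc hne
        rcases Finset.mem_insert.mp hc with rfl | hc
        · exact absurd rfl hne
        · by_cases hcm : c = m
          · subst hcm; exact h
          · exact hr.trans _ _ _ h (hm c hc hcm)
      · subst h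
        refine ⟨x, Finset.mem_insert_self _ _, ?_⟩
        intro c hc hne
        rcases Finset.mem_insert.mp hc with rfl | hc
        · exact absurd rfl hne
        · exact hm c hc hne
      · refine ⟨m, Finset.mem_insert_of_mem hmU, ?_⟩
        intro c hc hne
        rcases Finset.mem_insert.mp hc with rfl | hc
        · exact h
        · exact hm c hc hne

/-- attention frequency is bounded above by the probability of choosing from the
weak upper contour set. -/
theorem attFreq_le_piUpper {α : Type*} [Fintype α] [DecidableEq α]
    (π : α → Finset α → ℝ) (μ : Finset α → Finset α → ℝ) (r : α → α → Prop)
    (hπ : IsChoiceRule π) (hr : IsStrictTotalOrder α r) (hrep : Represents r μ π) :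
    ∀ T : Finset α, T.Nonempty → ∀ a ∈ T, attFreq μ a T ≤ piUpper π r a T := by
  intro T hT a haT
  obtain ⟨hμ, hπrep⟩ := hrep
  obtain ⟨hμnn, hμz, hμsum⟩ := hμ T hT
  have hμnn' : ∀ U ∈ T.powerset, 0 ≤ μ U T := by
    intro U hU
    rw [Finset.mem_powerset] at hU
    by_cases h : U.Nonempty
    · exact hμnn U h hU
    · rw [hμz U (fun hc => h hc.1)]
  have hrw : piUpper π r a T =
      ∑ U ∈ T.powerset, ∑ b ∈ T.filter (fun b => r b a ∨ b = a),
        (if IsMaxOf r b U then μ U T else 0) := by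
    rw [piUpper, Finset.sum_comm]
    refine Finset.sum_congr rfl fun b hb => ?_
    exact hπrep T hT b (Finset.mem_filter.mp hb).1
  rw [hrw, attFreq, Finset.sum_filter]
  refine Finset.sum_le_sum fun U hU => ?_
  have hnn : ∀ b ∈ T.filter (fun b => r b a ∨ b = a),
      0 ≤ (if IsMaxOf r b U then μ U T else 0) := by
    intro b _
    split
    · exact hμnn' U hU
    · exact le_rfl
  by_cases haU : a ∈ U
  · rw [if_pos haU]
    obtain ⟨m, hmU, hm⟩ := exists_rmax r hr U ⟨a, haU⟩
    have hmax : IsMaxOf r m U := ⟨hmU, hm⟩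
    have hmfilter : m ∈ T.filter (fun b => r b a ∨ b = a) := by
      rw [Finset.mem_filter]
      refine ⟨(Finset.mem_powerset.mp hU) hmU, ?_⟩
      by_cases h : a = m
      · exact Or.inr h.symm
      · exact Or.inl (hm a haU h)
    calc μ U T = (if IsMaxOf r m U then μ U T else 0) := by rw [if_pos hmax]
      _ ≤ _ := Finset.single_le_sum hnn hmfilter
  · rw [if_neg haU]
    exact Finset.sum_nonneg hnn
end

section
/- (Regularity Violation at Binary Comparisons.) Let X be a finite set of alternatives and let π be an AOM. If a, b ∈ S ⊆ X are distinct and π(a|S) > π(a|{a,b}), then b is revealed to be preferred to a; that is, for every pair (≻, μ) with μ satisfying attention overload that represents π, one has b ≻ a. -/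
open scoped Classical
open Finset

/-- regularity violation at binary comparisons reveals preference. -/
theorem revealed_pref_of_binary_regularity_violation {α : Type*} [Fintype α] [DecidableEq α]
    (π : α → Finset α → ℝ) (hπ : IsChoiceRule π) (hAOM : IsAOM π)
    (a b : α) (S : Finset α) (hne : a ≠ b) (haS : a ∈ S) (hbS : b ∈ S)
    (hreg : π a {a, b} < π a S) :
    ∀ (r : α → α → Prop) (μ : Finset α → Finset α → ℝ),
      IsStrictTotalOrder α r → AttentionOverload μ → Represents r μ π → r b a := by
  intro r μ hr hov hrep
  rcases (by by_cases h1 : r b a; exact Or.inl h1; by_cases h2 : r a b; exact Or.inr (Or.inr h2); exact Or.inr (Or.inl (hr.trichotomous b a h1 h2)) : r b a ∨ b = a ∨ r a b) with hba | heq | hab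
  · exact hba
  · exact absurd heq.symm hne
  · exfalso
    have hSne : S.Nonempty := ⟨a, haS⟩
    have hPne : ({a, b} : Finset α).Nonempty := ⟨a, by simp⟩
    have hPS : ({a, b} : Finset α) ⊆ S := by
      intro x hx
      simp only [Finset.mem_insert, Finset.mem_singleton] at hx
      rcases hx with h | h <;> simp [h, haS, hbS]
    have hμnn : ∀ T ∈ S.powerset, 0 ≤ μ T S := by
      intro T hT
      rcases T.eq_empty_or_nonempty with h | h
      · rw [(hrep.1 S hSne).2.1 T (by simp [h])]
      · exact (hrep.1 S hSne).1 T h (Finset.mem_powerset.mp hT)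
    have h1 : π a S ≤ attFreq μ a S := by
      rw [hrep.2 S hSne a haS, attFreq, Finset.sum_filter]
      apply Finset.sum_le_sum
      intro T hT
      by_cases hm : IsMaxOf r a T
      · simp [hm, hm.1]
      · simp only [hm, if_false]
        by_cases haT : a ∈ T
        · simpa [haT] using hμnn T hT
        · simp [haT]
    have h2 : attFreq μ a S ≤ attFreq μ a {a, b} := hov a {a, b} S (by simp) hPS
    have h3 : attFreq μ a {a, b} = π a {a, b} := by
      rw [hrep.2 {a, b} hPne a (by simp), attFreq, Finset.sum_filter]
      apply Finset.sum_congr rfl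
      intro T hT
      have hTsub := Finset.mem_powerset.mp hT
      by_cases haT : a ∈ T
      · have hmax : IsMaxOf r a T := by
          refine ⟨haT, ?_⟩
          intro c hc hcne
          have hc' := hTsub hc
          simp only [Finset.mem_insert, Finset.mem_singleton] at hc'
          rcases hc' with h | h
          · exact absurd h hcne
          · rw [h]; exact hab
        simp [haT, hmax]
      · have hm : ¬ IsMaxOf r a T := fun h => haT h.1
        simp [haT, hm]
    linarith
end

section
/- (Regularity Violation at Bigger Choice Problems.) Let X be a finite set of alternatives and let π be an AOM represented by (≻, μ) with μ satisfying attention overload. If a ∈ T ⊂ S ⊆ X and π(a|S) > π(a|T), then there exists b ∈ T with b ≻ a. -/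
open scoped Classical
open Finset

/-- regularity violation at bigger choice problems. -/
theorem exists_better_of_regularity_violation {α : Type*} [Fintype α] [DecidableEq α]
    (π : α → Finset α → ℝ) (μ : Finset α → Finset α → ℝ) (r : α → α → Prop)
    (hπ : IsChoiceRule π) (hr : IsStrictTotalOrder α r)
    (hAO : AttentionOverload μ) (hrep : Represents r μ π)
    (a : α) (T S : Finset α) (haT : a ∈ T) (hTS : T ⊂ S)
    (hreg : π a T < π a S) :
    ∃ b ∈ T, r b a := by
  by_contra h
  push_neg at h
  obtain ⟨hatt, hrepf⟩ := hrep
  have hSne : S.Nonempty := ⟨a, hTS.subset haT⟩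
  have hTne : T.Nonempty := ⟨a, haT⟩
  have hmax : ∀ T' ∈ T.powerset, a ∈ T' → IsMaxOf r a T' := by
    intro T' hT' haT'
    refine ⟨haT', fun b hb hne => ?_⟩
    rcases (show r a b ∨ a = b ∨ r b a by
      by_cases h1 : r a b
      · exact Or.inl h1
      by_cases h2 : r b a
      · exact Or.inr (Or.inr h2)
      exact Or.inr (Or.inl (hr.trichotomous a b h1 h2))) with h1 | h1 | h1
    · exact h1
    · exact absurd h1.symm hne
    · exact absurd h1 (h b ((Finset.mem_powerset.mp hT') hb))
  have hπT : π a T = attFreq μ a T := by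
    rw [hrepf T hTne a haT, attFreq, Finset.sum_filter]
    refine Finset.sum_congr rfl fun T' hT' => ?_
    by_cases hmem : a ∈ T'
    · rw [if_pos hmem, if_pos (hmax T' hT' hmem)]
    · rw [if_neg hmem, if_neg (fun hm => hmem hm.1)]
  have hπS : π a S ≤ attFreq μ a S := by
    rw [hrepf S hSne a (hTS.subset haT), attFreq, Finset.sum_filter]
    refine Finset.sum_le_sum fun T' hT' => ?_
    by_cases hm : IsMaxOf r a T'
    · rw [if_pos hm, if_pos hm.1]
    · rw [if_neg hm]
      by_cases hmem : a ∈ T'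
      · rw [if_pos hmem]
        exact (hatt S hSne).1 T' ⟨a, hmem⟩ (Finset.mem_powerset.mp hT')
      · rw [if_neg hmem]
  have := hAO a T S haT hTS.subset
  linarith
end

section
/- (Tightness of the revealed-attention bounds.) Let X be a finite set of alternatives and let π be an AOM represented by (≻, μ) with μ satisfying attention overload. Fix a nonempty S ⊆ X, a ∈ S, and any real number c with max over R with S ⊆ R ⊆ X of π(a|R) ≤ c ≤ min over T with a ∈ T ⊆ S of π(U_⪰(a)|T). Then there exists an attention rule μ' satisfying attention overload such that (≻, μ') represents π and φ_{μ'}(a|S) = c. -/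
open scoped Classical
open Finset

namespace AOMTight

variable {α : Type*} [Fintype α] [DecidableEq α]

lemma exists_isMaxOf {r : α → α → Prop} (hr : IsStrictTotalOrder α r) :
    ∀ T : Finset α, T.Nonempty → ∃ m, IsMaxOf r m T := by
  haveI := hr
  intro T
  induction T using Finset.induction_on with
  | empty => intro h; simp [Finset.not_nonempty_empty] at h
  | @insert y s hy ih =>
    intro _
    rcases s.eq_empty_or_nonempty with rfl | hs
    · refine ⟨y, Finset.mem_insert_self _ _, fun b hb hne => ?_⟩
      rcases Finset.mem_insert.1 hb with rfl | h
      · exact absurd rfl hne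
      · exact absurd h (Finset.notMem_empty b)
    · obtain ⟨m, hmT, hmax⟩ := ih hs
      rcases trichotomous_of r y m with hym | rfl | hmy
      · refine ⟨y, Finset.mem_insert_self _ _, fun b hb hne => ?_⟩
        rcases Finset.mem_insert.1 hb with rfl | hbs
        · exact absurd rfl hne
        · rcases eq_or_ne b m with rfl | hbm
          · exact hym
          · exact IsTrans.trans _ _ _ hym (hmax b hbs hbm)
      · refine ⟨y, Finset.mem_insert_self _ _, fun b hb hne => ?_⟩
        rcases Finset.mem_insert.1 hb with rfl | hbs
        · exact absurd rfl hne
        · exact hmax b hbs hne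
      · refine ⟨m, Finset.mem_insert.2 (Or.inr hmT), fun b hb hne => ?_⟩
        rcases Finset.mem_insert.1 hb with rfl | hbs
        · exact hmy
        · exact hmax b hbs hne

lemma isMaxOf_unique {r : α → α → Prop} (hr : IsStrictTotalOrder α r) {T : Finset α}
    {m₁ m₂ : α} (h₁ : IsMaxOf r m₁ T) (h₂ : IsMaxOf r m₂ T) : m₁ = m₂ := by
  haveI := hr
  by_contra hne
  exact irrefl_of r m₂ (IsTrans.trans _ _ _ (h₂.2 m₁ h₁.1 hne) (h₁.2 m₂ h₂.1 (Ne.symm hne)))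

lemma sum_prod_ite (q : α → ℝ) (L : Finset α) :
    ∑ R ∈ L.powerset, ∏ x ∈ L, (if x ∈ R then q x else 1 - q x) = 1 := by
  induction L using Finset.induction_on with
  | empty => simp
  | @insert y L hy ih =>
    rw [Finset.sum_powerset_insert hy]
    have h1 : ∀ R ∈ L.powerset, (∏ x ∈ insert y L, (if x ∈ R then q x else 1 - q x))
        = (1 - q y) * ∏ x ∈ L, (if x ∈ R then q x else 1 - q x) := by
      intro R hR
      rw [Finset.prod_insert hy, if_neg fun h => hy (Finset.mem_powerset.1 hR h)]
    have h2 : ∀ R ∈ L.powerset, (∏ x ∈ insert y L, (if x ∈ insert y R then q x else 1 - q x))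
        = q y * ∏ x ∈ L, (if x ∈ R then q x else 1 - q x) := by
      intro R hR
      rw [Finset.prod_insert hy, if_pos (Finset.mem_insert_self _ _)]
      congr 1
      refine Finset.prod_congr rfl fun x hx => ?_
      have hxy : x ≠ y := fun h => hy (h ▸ hx)
      simp [Finset.mem_insert, hxy]
    rw [Finset.sum_congr rfl h1, Finset.sum_congr rfl h2, ← Finset.mul_sum, ← Finset.mul_sum, ih]
    ring

lemma sum_prod_ite_mem (q : α → ℝ) {L : Finset α} {x₀ : α} (hx₀ : x₀ ∈ L) :
    ∑ R ∈ L.powerset.filter (fun R => x₀ ∈ R),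
      ∏ x ∈ L, (if x ∈ R then q x else 1 - q x) = q x₀ := by
  have key : ∑ R ∈ L.powerset.filter (fun R => x₀ ∈ R),
        ∏ x ∈ L, (if x ∈ R then q x else 1 - q x)
      = ∑ R' ∈ (L.erase x₀).powerset,
        (q x₀ * ∏ x ∈ L.erase x₀, (if x ∈ R' then q x else 1 - q x)) := by
    refine Finset.sum_nbij' (fun R => R.erase x₀) (fun R' => insert x₀ R') ?_ ?_ ?_ ?_ ?_
    · intro R hR
      rw [Finset.mem_filter] at hR
      exact Finset.mem_powerset.2
        (Finset.erase_subset_erase _ (Finset.mem_powerset.1 hR.1))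
    · intro R' hR'
      rw [Finset.mem_filter, Finset.mem_powerset]
      exact ⟨Finset.insert_subset hx₀
        ((Finset.mem_powerset.1 hR').trans (Finset.erase_subset _ _)),
        Finset.mem_insert_self _ _⟩
    · intro R hR
      exact Finset.insert_erase (Finset.mem_filter.1 hR).2
    · intro R' hR'
      exact Finset.erase_insert fun h =>
        (Finset.notMem_erase x₀ L) (Finset.mem_powerset.1 hR' h)
    · intro R hR
      have hx₀R : x₀ ∈ R := (Finset.mem_filter.1 hR).2
      have hsplit : ∏ x ∈ L, (if x ∈ R then q x else 1 - q x)
          = (if x₀ ∈ R then q x₀ else 1 - q x₀)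
            * ∏ x ∈ L.erase x₀, (if x ∈ R then q x else 1 - q x) :=
        (Finset.mul_prod_erase L _ hx₀).symm
      rw [hsplit, if_pos hx₀R]
      congr 1
      refine Finset.prod_congr rfl fun x hx => ?_
      have hxx : x ≠ x₀ := Finset.ne_of_mem_erase hx
      simp [Finset.mem_erase, hxx]
  rw [key, ← Finset.mul_sum, sum_prod_ite q (L.erase x₀), mul_one]

lemma sum_maxsets {r : α → α → Prop} (hr : IsStrictTotalOrder α r) {S' : Finset α} {m : α}
    (hm : m ∈ S') (q : α → ℝ) :
    ∑ T ∈ S'.powerset.filter (fun T => IsMaxOf r m T),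
      ∏ x ∈ S'.filter (fun x => r m x), (if x ∈ T then q x else 1 - q x) = 1 := by
  haveI := hr
  set L := S'.filter (fun x => r m x) with hL
  have hmL : m ∉ L := fun h => irrefl_of r m (Finset.mem_filter.1 h).2
  have key : ∑ T ∈ S'.powerset.filter (fun T => IsMaxOf r m T),
        ∏ x ∈ L, (if x ∈ T then q x else 1 - q x)
      = ∑ R ∈ L.powerset, ∏ x ∈ L, (if x ∈ R then q x else 1 - q x) := by
    refine Finset.sum_nbij' (fun T => T.erase m) (fun R => insert m R) ?_ ?_ ?_ ?_ ?_
    · intro T hT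
      rw [Finset.mem_filter, Finset.mem_powerset] at hT
      refine Finset.mem_powerset.2 fun x hx => ?_
      rw [Finset.mem_erase] at hx
      exact Finset.mem_filter.2 ⟨hT.1 hx.2, hT.2.2 x hx.2 hx.1⟩
    · intro R hR
      rw [Finset.mem_powerset] at hR
      rw [Finset.mem_filter, Finset.mem_powerset]
      refine ⟨Finset.insert_subset hm (hR.trans (Finset.filter_subset _ _)),
        Finset.mem_insert_self _ _, fun b hb hne => ?_⟩
      rcases Finset.mem_insert.1 hb with rfl | hbR
      · exact absurd rfl hne
      · exact (Finset.mem_filter.1 (hR hbR)).2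
    · intro T hT
      exact Finset.insert_erase (Finset.mem_filter.1 hT).2.1
    · intro R hR
      exact Finset.erase_insert fun h => hmL (Finset.mem_powerset.1 hR h)
    · intro T hT
      refine Finset.prod_congr rfl fun x hx => ?_
      have hxm : x ≠ m := fun h => hmL (h ▸ hx)
      simp [Finset.mem_erase, hxm]
  rw [key, sum_prod_ite]

lemma sum_maxsets_mem {r : α → α → Prop} (hr : IsStrictTotalOrder α r) {S' : Finset α}
    {m x₀ : α} (hm : m ∈ S') (hx₀ : x₀ ∈ S') (hmx : r m x₀) (q : α → ℝ) :
    ∑ T ∈ S'.powerset.filter (fun T => IsMaxOf r m T ∧ x₀ ∈ T),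
      ∏ x ∈ S'.filter (fun x => r m x), (if x ∈ T then q x else 1 - q x) = q x₀ := by
  haveI := hr
  set L := S'.filter (fun x => r m x) with hL
  have hmL : m ∉ L := fun h => irrefl_of r m (Finset.mem_filter.1 h).2
  have hx₀L : x₀ ∈ L := Finset.mem_filter.2 ⟨hx₀, hmx⟩
  have hx₀m : x₀ ≠ m := fun h => irrefl_of r m (h ▸ hmx)
  have key : ∑ T ∈ S'.powerset.filter (fun T => IsMaxOf r m T ∧ x₀ ∈ T),
        ∏ x ∈ L, (if x ∈ T then q x else 1 - q x)
      = ∑ R ∈ L.powerset.filter (fun R => x₀ ∈ R),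
        ∏ x ∈ L, (if x ∈ R then q x else 1 - q x) := by
    refine Finset.sum_nbij' (fun T => T.erase m) (fun R => insert m R) ?_ ?_ ?_ ?_ ?_
    · intro T hT
      rw [Finset.mem_filter, Finset.mem_powerset] at hT
      rw [Finset.mem_filter, Finset.mem_powerset]
      refine ⟨fun x hx => ?_, Finset.mem_erase.2 ⟨hx₀m, hT.2.2⟩⟩
      rw [Finset.mem_erase] at hx
      exact Finset.mem_filter.2 ⟨hT.1 hx.2, hT.2.1.2 x hx.2 hx.1⟩
    · intro R hR
      rw [Finset.mem_filter, Finset.mem_powerset] at hR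
      rw [Finset.mem_filter, Finset.mem_powerset]
      refine ⟨Finset.insert_subset hm ((hR.1).trans (Finset.filter_subset _ _)),
        ⟨Finset.mem_insert_self _ _, fun b hb hne => ?_⟩,
        Finset.mem_insert.2 (Or.inr hR.2)⟩
      rcases Finset.mem_insert.1 hb with rfl | hbR
      · exact absurd rfl hne
      · exact (Finset.mem_filter.1 (hR.1 hbR)).2
    · intro T hT
      exact Finset.insert_erase (Finset.mem_filter.1 hT).2.1.1
    · intro R hR
      exact Finset.erase_insert fun h =>
        hmL ((Finset.mem_powerset.1 (Finset.mem_filter.1 hR).1) h)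
    · intro T hT
      refine Finset.prod_congr rfl fun x hx => ?_
      have hxm : x ≠ m := fun h => hmL (h ▸ hx)
      simp [Finset.mem_erase, hxm]
  rw [key, sum_prod_ite_mem q hx₀L]

/-! ### The construction -/

noncomputable def gF (π : α → Finset α → ℝ) (a : α) (S' : Finset α) : ℝ :=
  sSup ((fun R => π a R) '' {R : Finset α | S' ⊆ R})

noncomputable def hF (π : α → Finset α → ℝ) (r : α → α → Prop) (x : α) (S' : Finset α) : ℝ :=
  sInf ((fun T => piUpper π r x T) '' {T : Finset α | x ∈ T ∧ T ⊆ S'})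

noncomputable def phi (π : α → Finset α → ℝ) (r : α → α → Prop) (a : α) (c : ℝ)
    (x : α) (S' : Finset α) : ℝ :=
  if x = a then min (hF π r a S') (max (gF π a S') c) else hF π r x S'

noncomputable def Dv (π : α → Finset α → ℝ) (r : α → α → Prop) (x : α) (S' : Finset α) : ℝ :=
  ∑ b ∈ S'.filter (fun b => r b x), π b S'

noncomputable def qv (π : α → Finset α → ℝ) (r : α → α → Prop) (a : α) (c : ℝ)
    (x : α) (S' : Finset α) : ℝ :=
  if Dv π r x S' = 0 then 0 else (phi π r a c x S' - π x S') / Dv π r x S'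

noncomputable def mu' (π : α → Finset α → ℝ) (r : α → α → Prop) (a : α) (c : ℝ)
    (T S' : Finset α) : ℝ :=
  ∑ m ∈ Finset.univ, if T ⊆ S' ∧ IsMaxOf r m T then
    π m S' * ∏ x ∈ S'.filter (fun x => r m x),
      (if x ∈ T then qv π r a c x S' else 1 - qv π r a c x S') else 0

/-! ### Basic facts -/

lemma pi_le_one {π : α → Finset α → ℝ} (hπ : IsChoiceRule π) {S' : Finset α}
    (hS' : S'.Nonempty) {b : α} (hb : b ∈ S') : π b S' ≤ 1 := by
  obtain ⟨h1, _, h3⟩ := hπ S' hS'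
  calc π b S' ≤ ∑ x ∈ S', π x S' := Finset.single_le_sum (fun x hx => h1 x hx) hb
  _ = 1 := h3

lemma ac_of_rep {π : α → Finset α → ℝ} {r : α → α → Prop} (hπ : IsChoiceRule π)
    (hr : IsStrictTotalOrder α r) {μ : Finset α → Finset α → ℝ}
    (hAO : AttentionOverload μ) (hrep : Represents r μ π) :
    SatisfiesAC π r := by
  intro x T S'' hxT hTS
  have hT : T.Nonempty := ⟨x, hxT⟩
  have hS'' : S''.Nonempty := ⟨x, hTS hxT⟩
  have hμ := hrep.1
  have hnn : ∀ (U : Finset α), U.Nonempty → ∀ T', 0 ≤ μ T' U := by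
    intro U hU T'
    by_cases h : T'.Nonempty ∧ T' ⊆ U
    · exact (hμ U hU).1 T' h.1 h.2
    · rw [(hμ U hU).2.1 T' h]
  have s1 : π x S'' ≤ attFreq μ x S'' := by
    rw [hrep.2 S'' hS'' x (hTS hxT)]
    have hrw : attFreq μ x S'' = ∑ T' ∈ S''.powerset, (if x ∈ T' then μ T' S'' else 0) := by
      simp only [attFreq]; rw [Finset.sum_filter]
    rw [hrw]
    refine Finset.sum_le_sum fun T' _ => ?_
    by_cases hmax : IsMaxOf r x T'
    · rw [if_pos hmax, if_pos hmax.1]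
    · rw [if_neg hmax]
      split
      · exact hnn S'' hS'' T'
      · exact le_refl 0
  have s2 : attFreq μ x S'' ≤ attFreq μ x T := hAO x T S'' hxT hTS
  have s3 : attFreq μ x T ≤ piUpper π r x T := by
    have hcongr : ∀ b ∈ T.filter (fun b => r b x ∨ b = x),
        π b T = ∑ T' ∈ T.powerset, (if IsMaxOf r b T' then μ T' T else 0) := fun b hb =>
      hrep.2 T hT b (Finset.mem_filter.1 hb).1
    calc attFreq μ x T = ∑ T' ∈ T.powerset, (if x ∈ T' then μ T' T else 0) := by
          simp only [attFreq]; rw [Finset.sum_filter]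
      _ ≤ ∑ T' ∈ T.powerset, ∑ b ∈ T.filter (fun b => r b x ∨ b = x),
            (if IsMaxOf r b T' then μ T' T else 0) := by
          refine Finset.sum_le_sum fun T' hT' => ?_
          by_cases hx : x ∈ T'
          · rw [if_pos hx]
            obtain ⟨m, hmmax⟩ := exists_isMaxOf hr T' ⟨x, hx⟩
            have hmT : m ∈ T.filter (fun b => r b x ∨ b = x) := by
              refine Finset.mem_filter.2 ⟨Finset.mem_powerset.1 hT' hmmax.1, ?_⟩
              rcases eq_or_ne m x with rfl | h
              · exact Or.inr rfl
              · exact Or.inl (hmmax.2 x hx (Ne.symm h))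
            have hnn' : ∀ b ∈ T.filter (fun b => r b x ∨ b = x),
                0 ≤ (fun b => if IsMaxOf r b T' then μ T' T else 0) b := by
              intro b _
              dsimp only
              split
              · exact hnn T hT T'
              · exact le_refl 0
            have hle := Finset.single_le_sum hnn' hmT
            rwa [if_pos hmmax] at hle
          · rw [if_neg hx]
            exact Finset.sum_nonneg fun b _ => by
              split
              · exact hnn T hT T'
              · exact le_refl 0
      _ = piUpper π r x T := ((Finset.sum_congr rfl hcongr).trans Finset.sum_comm).symm
  exact s1.trans (s2.trans s3)

/-! ### Bounds and monotonicity of the target profile -/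

lemma piUpper_split {π : α → Finset α → ℝ} {r : α → α → Prop} (hr : IsStrictTotalOrder α r)
    {x : α} {S' : Finset α} (hx : x ∈ S') :
    piUpper π r x S' = π x S' + Dv π r x S' := by
  haveI := hr
  simp only [piUpper, Dv]
  have hfe : S'.filter (fun b => r b x ∨ b = x) = insert x (S'.filter (fun b => r b x)) := by
    ext b
    simp only [Finset.mem_filter, Finset.mem_insert]
    constructor
    · rintro ⟨hb, h | rfl⟩
      · exact Or.inr ⟨hb, h⟩
      · exact Or.inl rfl
    · rintro (rfl | ⟨hb, h⟩)
      · exact ⟨hx, Or.inr rfl⟩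
      · exact ⟨hb, Or.inl h⟩
  rw [hfe, Finset.sum_insert (show x ∉ S'.filter (fun b => r b x) from
    fun h => irrefl_of r x (Finset.mem_filter.1 h).2)]

lemma Dv_nonneg {π : α → Finset α → ℝ} {r : α → α → Prop} (hπ : IsChoiceRule π)
    {x : α} {S' : Finset α} (hS' : S'.Nonempty) : 0 ≤ Dv π r x S' := by
  simp only [Dv]
  exact Finset.sum_nonneg fun b hb => (hπ S' hS').1 b (Finset.filter_subset _ _ hb)

lemma phi_bounds {π : α → Finset α → ℝ} {r : α → α → Prop} (a : α) (c : ℝ)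
    (hπ : IsChoiceRule π) (hAC : SatisfiesAC π r) {x : α} {S' : Finset α} (hx : x ∈ S') :
    π x S' ≤ phi π r a c x S' ∧ phi π r a c x S' ≤ piUpper π r x S' := by
  have hmem : piUpper π r x S'
      ∈ ((fun T => piUpper π r x T) '' {T : Finset α | x ∈ T ∧ T ⊆ S'}) :=
    ⟨S', ⟨hx, Finset.Subset.refl S'⟩, rfl⟩
  have hbdd : BddBelow ((fun T => piUpper π r x T) '' {T : Finset α | x ∈ T ∧ T ⊆ S'}) := by
    refine ⟨0, ?_⟩
    rintro v ⟨T, ⟨hxT, hTS⟩, rfl⟩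
    exact Finset.sum_nonneg fun b hb => (hπ T ⟨x, hxT⟩).1 b (Finset.filter_subset _ _ hb)
  have hfle : hF π r x S' ≤ piUpper π r x S' := csInf_le hbdd hmem
  have hfge : π x S' ≤ hF π r x S' := by
    refine le_csInf ⟨_, hmem⟩ ?_
    rintro v ⟨T, ⟨h1, h2⟩, rfl⟩
    exact hAC x T S' h1 h2
  by_cases hxa : x = a
  · subst hxa
    constructor
    · rw [phi, if_pos rfl]
      refine le_min hfge (le_max_of_le_left (le_csSup ⟨1, ?_⟩ ⟨S', Finset.Subset.refl S', rfl⟩))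
      rintro v ⟨R, hR, rfl⟩
      exact pi_le_one hπ ⟨x, hR hx⟩ (hR hx)
    · rw [phi, if_pos rfl]
      exact (min_le_left _ _).trans hfle
  · rw [phi, if_neg hxa]
    exact ⟨hfge, hfle⟩

lemma phi_mono {π : α → Finset α → ℝ} {r : α → α → Prop} (a : α) (c : ℝ)
    (hπ : IsChoiceRule π) {x : α} {T S' : Finset α} (hxT : x ∈ T) (hTS : T ⊆ S') :
    phi π r a c x S' ≤ phi π r a c x T := by
  have hbdd : BddBelow ((fun T' => piUpper π r x T') '' {T' : Finset α | x ∈ T' ∧ T' ⊆ S'}) := by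
    refine ⟨0, ?_⟩
    rintro v ⟨T', ⟨hxT', hT'S⟩, rfl⟩
    exact Finset.sum_nonneg fun b hb => (hπ T' ⟨x, hxT'⟩).1 b (Finset.filter_subset _ _ hb)
  have hne : ((fun T' => piUpper π r x T') '' {T' : Finset α | x ∈ T' ∧ T' ⊆ T}).Nonempty :=
    ⟨piUpper π r x T, T, ⟨hxT, Finset.Subset.refl T⟩, rfl⟩
  have hsub : ((fun T' => piUpper π r x T') '' {T' : Finset α | x ∈ T' ∧ T' ⊆ T})
      ⊆ ((fun T' => piUpper π r x T') '' {T' : Finset α | x ∈ T' ∧ T' ⊆ S'}) := by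
    rintro v ⟨T', ⟨h1, h2⟩, rfl⟩
    exact ⟨T', ⟨h1, h2.trans hTS⟩, rfl⟩
  have hh : hF π r x S' ≤ hF π r x T := csInf_le_csInf hbdd hne hsub
  by_cases hxa : x = a
  · subst hxa
    have hg : gF π x S' ≤ gF π x T := by
      refine csSup_le_csSup ⟨1, ?_⟩ ⟨π x S', S', Finset.Subset.refl S', rfl⟩ ?_
      · rintro v ⟨R, hR, rfl⟩
        exact pi_le_one hπ ⟨x, hR hxT⟩ (hR hxT)
      · rintro v ⟨R, hR, rfl⟩
        exact ⟨R, hTS.trans hR, rfl⟩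
    rw [phi, if_pos rfl, phi, if_pos rfl]
    exact min_le_min hh (max_le_max hg (le_refl c))
  · rw [phi, if_neg hxa, phi, if_neg hxa]
    exact hh

lemma qv_bounds {π : α → Finset α → ℝ} {r : α → α → Prop} (a : α) (c : ℝ)
    (hπ : IsChoiceRule π) (hr : IsStrictTotalOrder α r) (hAC : SatisfiesAC π r)
    {x : α} {S' : Finset α} (hx : x ∈ S') :
    0 ≤ qv π r a c x S' ∧ qv π r a c x S' ≤ 1 := by
  simp only [qv]
  by_cases hD : Dv π r x S' = 0
  · rw [if_pos hD]
    exact ⟨le_refl 0, zero_le_one⟩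
  · rw [if_neg hD]
    have hS' : S'.Nonempty := ⟨x, hx⟩
    have h0 : 0 ≤ Dv π r x S' := Dv_nonneg hπ hS'
    have hpos : 0 < Dv π r x S' := lt_of_le_of_ne h0 (Ne.symm hD)
    obtain ⟨h1, h2⟩ := phi_bounds a c hπ hAC hx
    rw [piUpper_split hr hx] at h2
    exact ⟨div_nonneg (by linarith) h0, (div_le_one hpos).2 (by linarith)⟩

/-! ### Summation identities for `mu'` -/

lemma sum_ite_max (S' : Finset α) (p : Finset α → Prop) [DecidablePred p]
    {r : α → α → Prop} (m : α) (hp : ∀ T, IsMaxOf r m T → p T) {W : Finset α → ℝ} :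
    ∑ T ∈ S'.powerset.filter p, (if T ⊆ S' ∧ IsMaxOf r m T then W T else 0)
      = ∑ T ∈ S'.powerset.filter (fun T => IsMaxOf r m T), W T := by
  rw [Finset.sum_filter, Finset.sum_filter]
  refine Finset.sum_congr rfl fun T hT => ?_
  have hTS : T ⊆ S' := Finset.mem_powerset.1 hT
  by_cases h1 : IsMaxOf r m T
  · simp [h1, hTS, hp T h1]
  · simp [h1]

lemma sum_ite_max_and (S' : Finset α) (p : Finset α → Prop) [DecidablePred p]
    {r : α → α → Prop} (m : α) {W : Finset α → ℝ} :
    ∑ T ∈ S'.powerset.filter p, (if T ⊆ S' ∧ IsMaxOf r m T then W T else 0)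
      = ∑ T ∈ S'.powerset.filter (fun T => IsMaxOf r m T ∧ p T), W T := by
  rw [Finset.sum_filter, Finset.sum_filter]
  refine Finset.sum_congr rfl fun T hT => ?_
  have hTS : T ⊆ S' := Finset.mem_powerset.1 hT
  by_cases h1 : IsMaxOf r m T <;> by_cases h2 : p T <;> simp [h1, h2, hTS]

lemma sum_ite_max_zero (S' : Finset α) (p : Finset α → Prop) [DecidablePred p]
    {r : α → α → Prop} (m : α) {W : Finset α → ℝ}
    (h : ∀ T, T ⊆ S' → IsMaxOf r m T → ¬ p T) :
    ∑ T ∈ S'.powerset.filter p, (if T ⊆ S' ∧ IsMaxOf r m T then W T else 0) = 0 := by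
  refine Finset.sum_eq_zero fun T hT => ?_
  rw [if_neg]
  rintro ⟨h1, h2⟩
  exact h T h1 h2 (Finset.mem_filter.1 hT).2

lemma mu'_eq {π : α → Finset α → ℝ} {r : α → α → Prop} (a : α) (c : ℝ)
    (hr : IsStrictTotalOrder α r) {T S' : Finset α} {m : α} (hTS : T ⊆ S')
    (hmax : IsMaxOf r m T) :
    mu' π r a c T S' = π m S' * ∏ x ∈ S'.filter (fun x => r m x),
      (if x ∈ T then qv π r a c x S' else 1 - qv π r a c x S') := by
  simp only [mu']
  rw [Finset.sum_eq_single m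
    (fun b _ hbm => if_neg fun h => hbm (isMaxOf_unique hr h.2 hmax))
    (fun h => absurd (Finset.mem_univ m) h), if_pos ⟨hTS, hmax⟩]

lemma mu'_nonneg {π : α → Finset α → ℝ} {r : α → α → Prop} (a : α) (c : ℝ)
    (hπ : IsChoiceRule π) (hr : IsStrictTotalOrder α r) (hAC : SatisfiesAC π r)
    {S' : Finset α} (hS' : S'.Nonempty) (T : Finset α) : 0 ≤ mu' π r a c T S' := by
  simp only [mu']
  refine Finset.sum_nonneg fun m _ => ?_
  split
  · rename_i h
    refine mul_nonneg ((hπ S' hS').1 m (h.1 h.2.1)) (Finset.prod_nonneg fun x hx => ?_)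
    have hxS : x ∈ S' := (Finset.mem_filter.1 hx).1
    obtain ⟨hq0, hq1⟩ := qv_bounds a c hπ hr hAC hxS
    split
    · exact hq0
    · linarith
  · exact le_refl 0

lemma mu'_zero {π : α → Finset α → ℝ} {r : α → α → Prop} (a : α) (c : ℝ)
    {T S' : Finset α} (h : ¬(T.Nonempty ∧ T ⊆ S')) : mu' π r a c T S' = 0 := by
  simp only [mu']
  exact Finset.sum_eq_zero fun m _ => if_neg fun hc => h ⟨⟨m, hc.2.1⟩, hc.1⟩

lemma mu'_sum_one {π : α → Finset α → ℝ} {r : α → α → Prop} (a : α) (c : ℝ)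
    (hπ : IsChoiceRule π) (hr : IsStrictTotalOrder α r) {S' : Finset α}
    (hS' : S'.Nonempty) :
    ∑ T ∈ S'.powerset.filter (fun T => T.Nonempty), mu' π r a c T S' = 1 := by
  have expand : ∑ T ∈ S'.powerset.filter (fun T => T.Nonempty), mu' π r a c T S'
      = ∑ m ∈ Finset.univ, ∑ T ∈ S'.powerset.filter (fun T => T.Nonempty),
        (if T ⊆ S' ∧ IsMaxOf r m T then
          π m S' * ∏ x ∈ S'.filter (fun x => r m x),
            (if x ∈ T then qv π r a c x S' else 1 - qv π r a c x S') else 0) := by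
    simp only [mu']
    rw [Finset.sum_comm]
  rw [expand]
  have key : ∀ m ∈ (Finset.univ : Finset α),
      (∑ T ∈ S'.powerset.filter (fun T => T.Nonempty),
        (if T ⊆ S' ∧ IsMaxOf r m T then
          π m S' * ∏ x ∈ S'.filter (fun x => r m x),
            (if x ∈ T then qv π r a c x S' else 1 - qv π r a c x S') else 0))
      = if m ∈ S' then π m S' else 0 := by
    intro m _
    by_cases hm : m ∈ S'
    · rw [if_pos hm, sum_ite_max S' (fun T => T.Nonempty) m (fun T h => ⟨m, h.1⟩),
        ← Finset.mul_sum, sum_maxsets hr hm, mul_one]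
    · rw [if_neg hm]
      exact sum_ite_max_zero S' (fun T => T.Nonempty) m
        (fun T h1 h2 _ => hm (h1 h2.1))
  rw [Finset.sum_congr rfl key, Finset.sum_ite_mem, Finset.univ_inter, (hπ S' hS').2.2]

lemma mu'_rep {π : α → Finset α → ℝ} {r : α → α → Prop} (a : α) (c : ℝ)
    (hπ : IsChoiceRule π) (hr : IsStrictTotalOrder α r) {S' : Finset α}
    (hS' : S'.Nonempty) {x : α} (hx : x ∈ S') :
    ∑ T ∈ S'.powerset, (if IsMaxOf r x T then mu' π r a c T S' else 0) = π x S' := by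
  rw [← Finset.sum_filter]
  have hcongr : ∀ T ∈ S'.powerset.filter (fun T => IsMaxOf r x T),
      mu' π r a c T S' = π x S' * ∏ y ∈ S'.filter (fun y => r x y),
        (if y ∈ T then qv π r a c y S' else 1 - qv π r a c y S') := by
    intro T hT
    rw [Finset.mem_filter, Finset.mem_powerset] at hT
    exact mu'_eq a c hr hT.1 hT.2
  rw [Finset.sum_congr rfl hcongr, ← Finset.mul_sum, sum_maxsets hr hx, mul_one]

lemma mu'_attFreq {π : α → Finset α → ℝ} {r : α → α → Prop} (a : α) (c : ℝ)
    (hπ : IsChoiceRule π) (hr : IsStrictTotalOrder α r) (hAC : SatisfiesAC π r)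
    {x₀ : α} {S' : Finset α} (hx₀ : x₀ ∈ S') :
    attFreq (mu' π r a c) x₀ S' = phi π r a c x₀ S' := by
  haveI := hr
  have hS' : S'.Nonempty := ⟨x₀, hx₀⟩
  have expand : attFreq (mu' π r a c) x₀ S'
      = ∑ m ∈ Finset.univ, ∑ T ∈ S'.powerset.filter (fun T => x₀ ∈ T),
        (if T ⊆ S' ∧ IsMaxOf r m T then
          π m S' * ∏ x ∈ S'.filter (fun x => r m x),
            (if x ∈ T then qv π r a c x S' else 1 - qv π r a c x S') else 0) := by
    simp only [attFreq, mu']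
    rw [Finset.sum_comm]
  rw [expand]
  have key : ∀ m ∈ (Finset.univ : Finset α),
      (∑ T ∈ S'.powerset.filter (fun T => x₀ ∈ T),
        (if T ⊆ S' ∧ IsMaxOf r m T then
          π m S' * ∏ x ∈ S'.filter (fun x => r m x),
            (if x ∈ T then qv π r a c x S' else 1 - qv π r a c x S') else 0))
      = if m = x₀ then π x₀ S'
        else if m ∈ S' ∧ r m x₀ then π m S' * qv π r a c x₀ S' else 0 := by
    intro m _
    by_cases hmx : m = x₀
    · subst hmx
      rw [if_pos rfl, sum_ite_max S' (fun T => m ∈ T) m (fun T h => h.1),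
        ← Finset.mul_sum, sum_maxsets hr hx₀, mul_one]
    · rw [if_neg hmx]
      by_cases hcond : m ∈ S' ∧ r m x₀
      · rw [if_pos hcond, sum_ite_max_and S' (fun T => x₀ ∈ T) m,
          ← Finset.mul_sum, sum_maxsets_mem hr hcond.1 hx₀ hcond.2]
      · rw [if_neg hcond]
        refine sum_ite_max_zero S' (fun T => x₀ ∈ T) m fun T h1 h2 hx₀T => ?_
        have hmS : m ∈ S' := h1 h2.1
        have hrmx : r m x₀ := h2.2 x₀ hx₀T (fun hh => hmx hh.symm)
        exact hcond ⟨hmS, hrmx⟩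
  rw [Finset.sum_congr rfl key,
    ← Finset.add_sum_erase _ _ (Finset.mem_univ x₀), if_pos rfl]
  have h2 : ∑ m ∈ (Finset.univ : Finset α).erase x₀,
      (if m = x₀ then π x₀ S'
        else if m ∈ S' ∧ r m x₀ then π m S' * qv π r a c x₀ S' else 0)
      = qv π r a c x₀ S' * Dv π r x₀ S' := by
    have hstep : ∀ m ∈ (Finset.univ : Finset α).erase x₀,
        (if m = x₀ then π x₀ S'
          else if m ∈ S' ∧ r m x₀ then π m S' * qv π r a c x₀ S' else 0)
        = if m ∈ S' ∧ r m x₀ then π m S' * qv π r a c x₀ S' else 0 :=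
      fun m hm => if_neg (Finset.ne_of_mem_erase hm)
    rw [Finset.sum_congr rfl hstep, ← Finset.sum_filter]
    have hset : ((Finset.univ : Finset α).erase x₀).filter (fun m => m ∈ S' ∧ r m x₀)
        = S'.filter (fun m => r m x₀) := by
      ext m
      simp only [Finset.mem_filter, Finset.mem_erase, Finset.mem_univ, true_and]
      constructor
      · rintro ⟨_, h1, h2⟩
        exact ⟨h1, h2⟩
      · rintro ⟨h1, h2⟩
        refine ⟨?_, h1, h2⟩
        exact ⟨fun hh => by subst hh; exact irrefl_of r m h2, trivial⟩
    rw [hset]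
    simp only [Dv]
    rw [Finset.mul_sum]
    exact Finset.sum_congr rfl fun m _ => mul_comm _ _
  rw [h2]
  obtain ⟨hb1, hb2⟩ := phi_bounds a c hπ hAC hx₀
  rw [piUpper_split hr hx₀] at hb2
  by_cases hD : Dv π r x₀ S' = 0
  · simp only [qv]
    rw [if_pos hD, zero_mul, add_zero]
    rw [hD, add_zero] at hb2
    exact (le_antisymm hb2 hb1).symm
  · simp only [qv]
    rw [if_neg hD, div_mul_cancel₀ _ hD]
    ring

end AOMTight

/-- tightness of the revealed-attention bounds. -/
theorem revealed_attention_bounds_tight {α : Type*} [Fintype α] [DecidableEq α]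
    (π : α → Finset α → ℝ) (μ : Finset α → Finset α → ℝ) (r : α → α → Prop)
    (hπ : IsChoiceRule π) (hr : IsStrictTotalOrder α r)
    (hAO : AttentionOverload μ) (hrep : Represents r μ π)
    (S : Finset α) (hS : S.Nonempty) (a : α) (haS : a ∈ S) (c : ℝ)
    (hc1 : sSup ((fun R => π a R) '' {R : Finset α | S ⊆ R}) ≤ c)
    (hc2 : c ≤ sInf ((fun T => piUpper π r a T) '' {T : Finset α | a ∈ T ∧ T ⊆ S})) :
    ∃ μ' : Finset α → Finset α → ℝ,
      AttentionOverload μ' ∧ Represents r μ' π ∧ attFreq μ' a S = c := by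
  have hAC : SatisfiesAC π r := AOMTight.ac_of_rep hπ hr hAO hrep
  refine ⟨AOMTight.mu' π r a c, ?_, ⟨?_, ?_⟩, ?_⟩
  · intro x T S' hxT hTS
    rw [AOMTight.mu'_attFreq a c hπ hr hAC (hTS hxT),
      AOMTight.mu'_attFreq a c hπ hr hAC hxT]
    exact AOMTight.phi_mono a c hπ hxT hTS
  · intro S' hS'
    exact ⟨fun T _ _ => AOMTight.mu'_nonneg a c hπ hr hAC hS' T,
      fun T h => AOMTight.mu'_zero a c h,
      AOMTight.mu'_sum_one a c hπ hr hS'⟩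
  · intro S' hS' x hx
    exact (AOMTight.mu'_rep a c hπ hr hS' hx).symm
  · rw [AOMTight.mu'_attFreq a c hπ hr hAC haS]
    have hphi : AOMTight.phi π r a c a S
        = min (AOMTight.hF π r a S) (max (AOMTight.gF π a S) c) := by
      simp [AOMTight.phi]
    rw [hphi]
    simp only [AOMTight.gF, AOMTight.hF]
    rw [max_eq_right hc1, min_eq_right hc2]
end

section
/- (Pessimistic Evaluation for Attention.) Let X be a finite set of alternatives and let π be an AOM represented by (≻, μ) with μ satisfying attention overload. Then there exists an attention rule μ* satisfying attention overload such that (≻, μ*) also represents π and, for every nonempty S ⊆ X and every a ∈ S, φ_{μ*}(a|S) = max over all R with S ⊆ R ⊆ X of π(a|R). -/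
open scoped Classical
open Finset

section AOMAux
set_option linter.unusedSectionVars false
variable {α : Type*} [Fintype α] [DecidableEq α]

variable {α : Type*} [Fintype α] [DecidableEq α]

lemma isMaxOf_unique {r : α → α → Prop} (hr : IsStrictTotalOrder α r)
    {a b : α} {T : Finset α} (ha : IsMaxOf r a T) (hb : IsMaxOf r b T) : a = b := by
  by_contra hne
  exact hr.irrefl a (hr.trans _ _ _ (ha.2 b hb.1 (fun h => hne h.symm)) (hb.2 a ha.1 hne))

lemma sum_powerset_prod (L : Finset α) (f g : α → ℝ) :
    ∑ B ∈ L.powerset, ∏ k ∈ L, (if k ∈ B then f k else g k) = ∏ k ∈ L, (f k + g k) := by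
  rw [Finset.prod_add]
  refine Finset.sum_congr rfl (fun B hB => ?_)
  have hBL := Finset.mem_powerset.mp hB
  rw [← Finset.prod_sdiff hBL, mul_comm]
  congr 1
  · exact Finset.prod_congr rfl (fun k hk => if_pos hk)
  · exact Finset.prod_congr rfl (fun k hk => if_neg (Finset.mem_sdiff.mp hk).2)

lemma sum_powerset_prod_mem (L : Finset α) {a : α} (ha : a ∈ L) (f g : α → ℝ) :
    ∑ B ∈ L.powerset.filter (fun B => a ∈ B), ∏ k ∈ L, (if k ∈ B then f k else g k)
      = f a * ∏ k ∈ L.erase a, (f k + g k) := by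
  rw [← sum_powerset_prod (L.erase a) f g, Finset.mul_sum]
  refine Finset.sum_nbij' (fun B => B.erase a) (fun C => insert a C) ?_ ?_ ?_ ?_ ?_
  · intro B hB
    have h := Finset.mem_filter.mp hB
    exact Finset.mem_powerset.mpr (Finset.erase_subset_erase a (Finset.mem_powerset.mp h.1))
  · intro C hC
    have hC' := Finset.mem_powerset.mp hC
    refine Finset.mem_filter.mpr ⟨Finset.mem_powerset.mpr ?_, Finset.mem_insert_self a C⟩
    exact Finset.insert_subset ha (hC'.trans (Finset.erase_subset a L))
  · intro B hB
    exact Finset.insert_erase (Finset.mem_filter.mp hB).2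
  · intro C hC
    have hC' := Finset.mem_powerset.mp hC
    exact Finset.erase_insert (fun h => (Finset.mem_erase.mp (hC' h)).1 rfl)
  · intro B hB
    have haB := (Finset.mem_filter.mp hB).2
    rw [← Finset.mul_prod_erase L _ ha, if_pos haB]
    congr 1
    refine Finset.prod_congr rfl (fun k hk => ?_)
    have hka := (Finset.mem_erase.mp hk).1
    by_cases h : k ∈ B
    · rw [if_pos h, if_pos (Finset.mem_erase.mpr ⟨hka, h⟩)]
    · rw [if_neg h, if_neg (fun hc => h (Finset.mem_of_mem_erase hc))]

/-- The pessimistic attention rule built from `π`, preference `r` and inclusion weights `w`. -/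
noncomputable def mus (π : α → Finset α → ℝ) (r : α → α → Prop) (w : α → Finset α → ℝ)
    (T S : Finset α) : ℝ :=
  if h : (∃ m, IsMaxOf r m T) ∧ T ⊆ S then
    π h.1.choose S *
      ∏ k ∈ S.filter (fun k => r h.1.choose k), (if k ∈ T then w k S else 1 - w k S)
  else 0

lemma mus_eq {π : α → Finset α → ℝ} {r : α → α → Prop} (hr : IsStrictTotalOrder α r)
    (w : α → Finset α → ℝ) {m : α} {T S : Finset α} (hm : IsMaxOf r m T) (hTS : T ⊆ S) :
    mus π r w T S
      = π m S * ∏ k ∈ S.filter (fun k => r m k), (if k ∈ T then w k S else 1 - w k S) := by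
  have hc : ∀ (h : (∃ x, IsMaxOf r x T) ∧ T ⊆ S), h.1.choose = m :=
    fun h => isMaxOf_unique hr h.1.choose_spec hm
  rw [mus, dif_pos ⟨⟨m, hm⟩, hTS⟩, hc ⟨⟨m, hm⟩, hTS⟩]

lemma mus_eq_zero {π : α → Finset α → ℝ} {r : α → α → Prop} (w : α → Finset α → ℝ)
    {T S : Finset α} (h : ¬(T.Nonempty ∧ T ⊆ S)) : mus π r w T S = 0 := by
  rw [mus, dif_neg]
  rintro ⟨⟨m, hm⟩, hsub⟩
  exact h ⟨⟨m, hm.1⟩, hsub⟩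

lemma mus_sum_max {π : α → Finset α → ℝ} {r : α → α → Prop} (hr : IsStrictTotalOrder α r)
    (w : α → Finset α → ℝ) {S : Finset α} {m : α} (hm : m ∈ S) :
    ∑ T ∈ S.powerset.filter (fun T => IsMaxOf r m T), mus π r w T S = π m S := by
  set L := S.filter (fun k => r m k) with hL
  have hmL : m ∉ L := fun h => hr.irrefl m (Finset.mem_filter.mp h).2
  have step : ∑ T ∈ S.powerset.filter (fun T => IsMaxOf r m T), mus π r w T S
      = ∑ B ∈ L.powerset, π m S * ∏ k ∈ L, (if k ∈ B then w k S else 1 - w k S) := by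
    refine Finset.sum_nbij' (fun T => T.erase m) (fun B => insert m B) ?_ ?_ ?_ ?_ ?_
    · intro T hT
      have h := Finset.mem_filter.mp hT
      have hTS := Finset.mem_powerset.mp h.1
      refine Finset.mem_powerset.mpr (fun k hk => ?_)
      have hk' := Finset.mem_erase.mp hk
      exact Finset.mem_filter.mpr ⟨hTS hk'.2, h.2.2 k hk'.2 hk'.1⟩
    · intro B hB
      have hBL := Finset.mem_powerset.mp hB
      refine Finset.mem_filter.mpr ⟨Finset.mem_powerset.mpr ?_, Finset.mem_insert_self m B, ?_⟩
      · exact Finset.insert_subset hm (hBL.trans (Finset.filter_subset _ _))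
      · intro b hb hne
        rcases Finset.mem_insert.mp hb with rfl | hbB
        · exact absurd rfl hne
        · exact (Finset.mem_filter.mp (hBL hbB)).2
    · intro T hT
      exact Finset.insert_erase (Finset.mem_filter.mp hT).2.1
    · intro B hB
      exact Finset.erase_insert (fun h => hmL (Finset.mem_powerset.mp hB h))
    · intro T hT
      have h := Finset.mem_filter.mp hT
      rw [mus_eq hr w h.2 (Finset.mem_powerset.mp h.1)]
      congr 1
      refine Finset.prod_congr rfl (fun k hk => ?_)
      have hkm : k ≠ m := fun hc => hr.irrefl m (hc ▸ (Finset.mem_filter.mp hk).2)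
      by_cases hkT : k ∈ T
      · rw [if_pos hkT, if_pos (Finset.mem_erase.mpr ⟨hkm, hkT⟩)]
      · rw [if_neg hkT, if_neg (fun hc => hkT (Finset.mem_of_mem_erase hc))]
  rw [step, ← Finset.mul_sum, sum_powerset_prod]
  have : ∏ k ∈ L, (w k S + (1 - w k S)) = 1 := by
    rw [Finset.prod_congr rfl (fun k _ => by ring : ∀ k ∈ L, w k S + (1 - w k S) = (1:ℝ))]
    exact Finset.prod_const_one
  rw [this, mul_one]

lemma mus_sum_max_mem {π : α → Finset α → ℝ} {r : α → α → Prop} (hr : IsStrictTotalOrder α r)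
    (w : α → Finset α → ℝ) {S : Finset α} {m a : α} (hm : m ∈ S) (ha : a ∈ S) (hma : r m a) :
    ∑ T ∈ S.powerset.filter (fun T => IsMaxOf r m T ∧ a ∈ T), mus π r w T S
      = π m S * w a S := by
  set L := S.filter (fun k => r m k) with hL
  have hmL : m ∉ L := fun h => hr.irrefl m (Finset.mem_filter.mp h).2
  have haL : a ∈ L := Finset.mem_filter.mpr ⟨ha, hma⟩
  have ham : a ≠ m := fun hc => hr.irrefl m (hc ▸ hma)
  have step : ∑ T ∈ S.powerset.filter (fun T => IsMaxOf r m T ∧ a ∈ T), mus π r w T S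
      = ∑ B ∈ L.powerset.filter (fun B => a ∈ B),
          π m S * ∏ k ∈ L, (if k ∈ B then w k S else 1 - w k S) := by
    refine Finset.sum_nbij' (fun T => T.erase m) (fun B => insert m B) ?_ ?_ ?_ ?_ ?_
    · intro T hT
      have h := Finset.mem_filter.mp hT
      have hTS := Finset.mem_powerset.mp h.1
      refine Finset.mem_filter.mpr ⟨Finset.mem_powerset.mpr (fun k hk => ?_),
        Finset.mem_erase.mpr ⟨ham, h.2.2⟩⟩
      have hk' := Finset.mem_erase.mp hk
      exact Finset.mem_filter.mpr ⟨hTS hk'.2, h.2.1.2 k hk'.2 hk'.1⟩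
    · intro B hB
      have h := Finset.mem_filter.mp hB
      have hBL := Finset.mem_powerset.mp h.1
      refine Finset.mem_filter.mpr ⟨Finset.mem_powerset.mpr ?_,
        ⟨Finset.mem_insert_self m B, ?_⟩, Finset.mem_insert_of_mem h.2⟩
      · exact Finset.insert_subset hm (hBL.trans (Finset.filter_subset _ _))
      · intro b hb hne
        rcases Finset.mem_insert.mp hb with rfl | hbB
        · exact absurd rfl hne
        · exact (Finset.mem_filter.mp (hBL hbB)).2
    · intro T hT
      exact Finset.insert_erase (Finset.mem_filter.mp hT).2.1.1
    · intro B hB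
      exact Finset.erase_insert
        (fun h => hmL (Finset.mem_powerset.mp (Finset.mem_filter.mp hB).1 h))
    · intro T hT
      have h := Finset.mem_filter.mp hT
      rw [mus_eq hr w h.2.1 (Finset.mem_powerset.mp h.1)]
      congr 1
      refine Finset.prod_congr rfl (fun k hk => ?_)
      have hkm : k ≠ m := fun hc => hr.irrefl m (hc ▸ (Finset.mem_filter.mp hk).2)
      by_cases hkT : k ∈ T
      · rw [if_pos hkT, if_pos (Finset.mem_erase.mpr ⟨hkm, hkT⟩)]
      · rw [if_neg hkT, if_neg (fun hc => hkT (Finset.mem_of_mem_erase hc))]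
  rw [step, ← Finset.mul_sum, sum_powerset_prod_mem L haL]
  have : ∏ k ∈ L.erase a, (w k S + (1 - w k S)) = 1 := by
    rw [Finset.prod_congr rfl (fun k _ => by ring : ∀ k ∈ L.erase a, w k S + (1 - w k S) = (1:ℝ))]
    exact Finset.prod_const_one
  rw [this, mul_one]

lemma mus_nonneg {π : α → Finset α → ℝ} {r : α → α → Prop} (hr : IsStrictTotalOrder α r)
    (w : α → Finset α → ℝ) {T S : Finset α} (hTS : T ⊆ S)
    (hπ0 : ∀ b ∈ S, 0 ≤ π b S) (hw : ∀ k ∈ S, 0 ≤ w k S ∧ w k S ≤ 1) :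
    0 ≤ mus π r w T S := by
  by_cases h : (∃ m, IsMaxOf r m T) ∧ T ⊆ S
  · obtain ⟨m, hm⟩ := h.1
    rw [mus_eq hr w hm hTS]
    refine mul_nonneg (hπ0 m (hTS hm.1)) (Finset.prod_nonneg (fun k hk => ?_))
    have hkS := (Finset.mem_filter.mp hk).1
    by_cases hkT : k ∈ T
    · rw [if_pos hkT]; exact (hw k hkS).1
    · rw [if_neg hkT]; linarith [(hw k hkS).2]
  · rw [mus, dif_neg h]

lemma exists_isMaxOf {r : α → α → Prop} (hr : IsStrictTotalOrder α r)
    {T : Finset α} (hT : T.Nonempty) : ∃ a, IsMaxOf r a T := by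
  induction T using Finset.induction_on with
  | empty => exact absurd hT (by simp)
  | @insert a T ha ih =>
    rcases T.eq_empty_or_nonempty with rfl | hT'
    · refine ⟨a, Finset.mem_insert_self a ∅, fun b hb hne => ?_⟩
      simp only [Finset.mem_insert, Finset.notMem_empty, or_false] at hb
      exact absurd hb hne
    · obtain ⟨m, hmT, hmax⟩ := ih hT'
      rcases (by have h := hr.trichotomous a m; tauto : r a m ∨ a = m ∨ r m a) with h | rfl | h
      · refine ⟨a, Finset.mem_insert_self a T, fun b hb hne => ?_⟩
        rcases Finset.mem_insert.mp hb with rfl | hbT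
        · exact absurd rfl hne
        · rcases eq_or_ne b m with rfl | hbm
          · exact h
          · exact hr.trans _ _ _ h (hmax b hbT hbm)
      · exact absurd hmT ha
      · refine ⟨m, Finset.mem_insert_of_mem hmT, fun b hb hne => ?_⟩
        rcases Finset.mem_insert.mp hb with rfl | hbT
        · exact h
        · exact hmax b hbT hne

lemma decomp_mem {r : α → α → Prop} (hr : IsStrictTotalOrder α r) (S : Finset α) (a : α)
    (ν : Finset α → ℝ) :
    ∑ T ∈ S.powerset.filter (fun T => a ∈ T), ν T
      = ∑ b ∈ S.filter (fun b => r b a ∨ b = a),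
          ∑ T ∈ S.powerset.filter (fun T => IsMaxOf r b T ∧ a ∈ T), ν T := by
  set g : Finset α → α := fun T => if h : ∃ m, IsMaxOf r m T then h.choose else a with hg
  have hgspec : ∀ T : Finset α, T.Nonempty → IsMaxOf r (g T) T := by
    intro T hT
    have hex : ∃ m, IsMaxOf r m T := exists_isMaxOf hr hT
    simp only [hg, dif_pos hex]
    exact hex.choose_spec
  have hgeq : ∀ (T : Finset α) (b : α), IsMaxOf r b T → g T = b := by
    intro T b hb
    exact isMaxOf_unique hr (hgspec T ⟨b, hb.1⟩) hb
  have hmaps : ∀ T ∈ S.powerset.filter (fun T => a ∈ T),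
      g T ∈ S.filter (fun b => r b a ∨ b = a) := by
    intro T hT
    have hT' := Finset.mem_filter.mp hT
    have hTS := Finset.mem_powerset.mp hT'.1
    have hmax := hgspec T ⟨a, hT'.2⟩
    refine Finset.mem_filter.mpr ⟨hTS hmax.1, ?_⟩
    rcases eq_or_ne a (g T) with h | h
    · exact Or.inr h.symm
    · exact Or.inl (hmax.2 a hT'.2 h)
  rw [← Finset.sum_fiberwise_of_maps_to hmaps ν]
  refine Finset.sum_congr rfl (fun b hb => ?_)
  refine Finset.sum_congr ?_ (fun _ _ => rfl)
  ext T
  simp only [Finset.mem_filter, Finset.mem_powerset]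
  constructor
  · rintro ⟨⟨hTS, haT⟩, hgT⟩
    exact ⟨hTS, hgT ▸ hgspec T ⟨a, haT⟩, haT⟩
  · rintro ⟨hTS, hmax, haT⟩
    exact ⟨⟨hTS, haT⟩, hgeq T b hmax⟩

lemma decomp_all {r : α → α → Prop} (hr : IsStrictTotalOrder α r) {S : Finset α}
    (hS : S.Nonempty) (ν : Finset α → ℝ) :
    ∑ T ∈ S.powerset.filter (fun T => T.Nonempty), ν T
      = ∑ b ∈ S, ∑ T ∈ S.powerset.filter (fun T => IsMaxOf r b T), ν T := by
  set g : Finset α → α := fun T => if h : ∃ m, IsMaxOf r m T then h.choose else hS.choose with hg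
  have hgspec : ∀ T : Finset α, T.Nonempty → IsMaxOf r (g T) T := by
    intro T hT
    have hex : ∃ m, IsMaxOf r m T := exists_isMaxOf hr hT
    simp only [hg, dif_pos hex]
    exact hex.choose_spec
  have hgeq : ∀ (T : Finset α) (b : α), IsMaxOf r b T → g T = b := by
    intro T b hb
    exact isMaxOf_unique hr (hgspec T ⟨b, hb.1⟩) hb
  have hmaps : ∀ T ∈ S.powerset.filter (fun T => T.Nonempty), g T ∈ S := by
    intro T hT
    have hT' := Finset.mem_filter.mp hT
    exact (Finset.mem_powerset.mp hT'.1) (hgspec T hT'.2).1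
  rw [← Finset.sum_fiberwise_of_maps_to hmaps ν]
  refine Finset.sum_congr rfl (fun b hb => ?_)
  refine Finset.sum_congr ?_ (fun _ _ => rfl)
  ext T
  simp only [Finset.mem_filter, Finset.mem_powerset]
  constructor
  · rintro ⟨⟨hTS, hTne⟩, hgT⟩
    exact ⟨hTS, hgT ▸ hgspec T hTne⟩
  · rintro ⟨hTS, hmax⟩
    exact ⟨⟨hTS, ⟨b, hmax.1⟩⟩, hgeq T b hmax⟩


end AOMAux

/-- pessimistic evaluation for attention. -/
theorem pessimistic_attention_rule {α : Type*} [Fintype α] [DecidableEq α]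
    (π : α → Finset α → ℝ) (μ : Finset α → Finset α → ℝ) (r : α → α → Prop)
    (hπ : IsChoiceRule π) (hr : IsStrictTotalOrder α r)
    (hAO : AttentionOverload μ) (hrep : Represents r μ π) :
    ∃ μs : Finset α → Finset α → ℝ,
      AttentionOverload μs ∧ Represents r μs π ∧
      ∀ S : Finset α, S.Nonempty → ∀ a ∈ S,
        attFreq μs a S = sSup ((fun R => π a R) '' {R : Finset α | S ⊆ R}) := by
  classical
  obtain ⟨hμatt, hμrep⟩ := hrep
  set Phi : α → Finset α → ℝ :=
    fun a S => sSup ((fun R => π a R) '' {R : Finset α | S ⊆ R}) with hPhi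
  have hle_phi : ∀ (a : α) (S R : Finset α), S ⊆ R → π a R ≤ Phi a S := by
    intro a S R h
    exact le_csSup (Set.Finite.bddAbove (Set.toFinite _)) ⟨R, h, rfl⟩
  have hphi_le : ∀ (a : α) (S : Finset α) (x : ℝ),
      (∀ R : Finset α, S ⊆ R → π a R ≤ x) → Phi a S ≤ x := by
    intro a S x h
    refine csSup_le ⟨π a S, ⟨S, Finset.Subset.refl S, rfl⟩⟩ ?_
    rintro y ⟨R, hR, rfl⟩
    exact h R hR
  have hAC : ∀ (a : α) (S R : Finset α), a ∈ S → S ⊆ R → π a R ≤ piUpper π r a S := by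
    intro a S R haS hSR
    have haR : a ∈ R := hSR haS
    have hRne : R.Nonempty := ⟨a, haR⟩
    have hSne : S.Nonempty := ⟨a, haS⟩
    have step1 : π a R ≤ attFreq μ a R := by
      rw [hμrep R hRne a haR, ← Finset.sum_filter]
      unfold attFreq
      refine Finset.sum_le_sum_of_subset_of_nonneg ?_ ?_
      · intro T hT
        have h := Finset.mem_filter.mp hT
        exact Finset.mem_filter.mpr ⟨h.1, h.2.1⟩
      · intro T hT _
        have h := Finset.mem_filter.mp hT
        exact (hμatt R hRne).1 T ⟨a, h.2⟩ (Finset.mem_powerset.mp h.1)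
    have step2 : attFreq μ a R ≤ attFreq μ a S := hAO a S R haS hSR
    have step3 : attFreq μ a S ≤ piUpper π r a S := by
      unfold attFreq piUpper
      rw [decomp_mem hr S a (fun T => μ T S)]
      refine Finset.sum_le_sum (fun b hb => ?_)
      have hb' := Finset.mem_filter.mp hb
      rw [hμrep S hSne b hb'.1, ← Finset.sum_filter]
      refine Finset.sum_le_sum_of_subset_of_nonneg ?_ ?_
      · intro T hT
        have h := Finset.mem_filter.mp hT
        exact Finset.mem_filter.mpr ⟨h.1, h.2.1⟩
      · intro T hT _
        have h := Finset.mem_filter.mp hT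
        exact (hμatt S hSne).1 T ⟨b, h.2.1⟩ (Finset.mem_powerset.mp h.1)
    linarith
  set PPf : α → Finset α → ℝ := fun a S => ∑ b ∈ S.filter (fun b => r b a), π b S with hPPf
  have hsplitF : ∀ (a : α) (S : Finset α), a ∈ S →
      S.filter (fun b => r b a ∨ b = a) = insert a (S.filter (fun b => r b a)) := by
    intro a S haS
    ext b
    simp only [Finset.mem_filter, Finset.mem_insert]
    constructor
    · rintro ⟨hbS, h | h⟩
      · exact Or.inr ⟨hbS, h⟩
      · exact Or.inl h
    · rintro (rfl | ⟨hbS, h⟩)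
      · exact ⟨haS, Or.inr rfl⟩
      · exact ⟨hbS, Or.inl h⟩
  have hnotmemF : ∀ (a : α) (S : Finset α), a ∉ S.filter (fun b => r b a) :=
    fun a S h => hr.irrefl a (Finset.mem_filter.mp h).2
  have hupper : ∀ (a : α) (S : Finset α), a ∈ S → piUpper π r a S = π a S + PPf a S := by
    intro a S haS
    unfold piUpper
    rw [hsplitF a S haS, Finset.sum_insert (hnotmemF a S)]
  have hPP_nonneg : ∀ (S : Finset α), S.Nonempty → ∀ a : α, 0 ≤ PPf a S := by
    intro S hS a
    exact Finset.sum_nonneg (fun b hb => (hπ S hS).1 b (Finset.mem_filter.mp hb).1)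
  have hphi_ge : ∀ (a : α) (S : Finset α), π a S ≤ Phi a S :=
    fun a S => hle_phi a S S (Finset.Subset.refl S)
  have hphi_ub : ∀ (a : α) (S : Finset α), a ∈ S → Phi a S ≤ π a S + PPf a S := by
    intro a S haS
    rw [← hupper a S haS]
    exact hphi_le a S _ (fun R hR => hAC a S R haS hR)
  set q : α → Finset α → ℝ :=
    fun a S => if PPf a S = 0 then 0 else (Phi a S - π a S) / PPf a S with hq
  have hqb : ∀ (S : Finset α), S.Nonempty → ∀ a ∈ S, 0 ≤ q a S ∧ q a S ≤ 1 := by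
    intro S hS a haS
    by_cases h : PPf a S = 0
    · simp [hq, h]
    · have hpos : 0 < PPf a S := lt_of_le_of_ne (hPP_nonneg S hS a) (Ne.symm h)
      constructor
      · simp only [hq, if_neg h]
        exact div_nonneg (by linarith [hphi_ge a S]) hpos.le
      · simp only [hq, if_neg h]
        rw [div_le_one hpos]
        linarith [hphi_ub a S haS]
  have hqid : ∀ (S : Finset α), S.Nonempty → ∀ a ∈ S, π a S + PPf a S * q a S = Phi a S := by
    intro S hS a haS
    by_cases h : PPf a S = 0
    · have h1 := hphi_ub a S haS
      have h2 := hphi_ge a S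
      simp only [hq, if_pos h, mul_zero, add_zero]
      rw [h, add_zero] at h1
      linarith
    · simp only [hq, if_neg h]
      rw [mul_comm, div_mul_cancel₀ _ h]
      ring
  have hfreq : ∀ S : Finset α, S.Nonempty → ∀ a ∈ S, attFreq (mus π r q) a S = Phi a S := by
    intro S hS a haS
    unfold attFreq
    rw [decomp_mem hr S a (fun T => mus π r q T S), hsplitF a S haS,
      Finset.sum_insert (hnotmemF a S)]
    have h1 : S.powerset.filter (fun T => IsMaxOf r a T ∧ a ∈ T)
        = S.powerset.filter (fun T => IsMaxOf r a T) := by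
      ext T
      simp only [Finset.mem_filter]
      constructor
      · rintro ⟨h1, h2, h3⟩
        exact ⟨h1, h2⟩
      · rintro ⟨h1, h2⟩
        exact ⟨h1, h2, h2.1⟩
    rw [h1, mus_sum_max hr q haS]
    have h2 : ∀ b ∈ S.filter (fun b => r b a),
        (∑ T ∈ S.powerset.filter (fun T => IsMaxOf r b T ∧ a ∈ T), mus π r q T S)
          = π b S * q a S := by
      intro b hb
      have hb' := Finset.mem_filter.mp hb
      exact mus_sum_max_mem hr q hb'.1 haS hb'.2
    rw [Finset.sum_congr rfl h2, ← Finset.sum_mul]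
    exact hqid S hS a haS
  refine ⟨mus π r q, ?_, ⟨?_, ?_⟩, ?_⟩
  · intro a T S haT hTS
    have haS := hTS haT
    rw [hfreq S ⟨a, haS⟩ a haS, hfreq T ⟨a, haT⟩ a haT]
    exact hphi_le a S _ (fun R hR => hle_phi a T R (hTS.trans hR))
  · intro S hS
    refine ⟨fun T hTne hTS => mus_nonneg hr q hTS (hπ S hS).1 (fun k hk => hqb S hS k hk),
      fun T hT => mus_eq_zero q hT, ?_⟩
    rw [decomp_all hr hS (fun T => mus π r q T S),
      Finset.sum_congr rfl (fun b hb => mus_sum_max hr q hb)]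
    exact (hπ S hS).2.2
  · intro S hS a haS
    rw [← Finset.sum_filter]
    exact (mus_sum_max hr q haS).symm
  · intro S hS a haS
    exact hfreq S hS a haS
end

section
/- (Corollary of the characterization.) Let X be a finite set of alternatives and π a choice rule. Then π is an AOM (i.e., π is represented by some pair (≻, μ) with μ satisfying attention overload) if and only if there exists a preference ordering ≻ on X such that (π, ≻) satisfies AC. -/
open scoped Classical
open Finset

section Construction
variable {α : Type*} [Fintype α] [DecidableEq α] [LinearOrder α]

lemma isMaxOf_lt_iff {a : α} {T : Finset α} :
    IsMaxOf (· < ·) a T ↔ ∃ h : T.Nonempty, a = T.min' h := by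
  constructor
  · rintro ⟨ha, h⟩
    refine ⟨⟨a, ha⟩, ?_⟩
    refine le_antisymm ?_ (T.min'_le a ha)
    refine T.le_min' _ _ fun b hb => ?_
    rcases eq_or_ne b a with rfl | hne
    · rfl
    · exact (h b hb hne).le
  · rintro ⟨h, rfl⟩
    exact ⟨T.min'_mem h, fun b hb hne => lt_of_le_of_ne (T.min'_le b hb) (Ne.symm hne)⟩

lemma min'_insert_eq {a : α} {B : Finset α} (hB : ∀ x ∈ B, a < x) :
    (insert a B).min' (insert_nonempty a B) = a := by
  refine le_antisymm (min'_le _ _ (mem_insert_self a B)) (le_min' _ _ _ ?_)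
  intro y hy
  rcases mem_insert.1 hy with rfl | h
  · exact le_rfl
  · exact (hB y h).le

lemma filter_isMaxOf_eq_image {a : α} {S : Finset α} (ha : a ∈ S) (p : Finset α → Prop) :
    S.powerset.filter (fun T => IsMaxOf (· < ·) a T ∧ p T) =
      (((S.filter (fun x => a < x)).powerset.filter (fun B => p (insert a B))).image
        (insert a)) := by
  ext T
  simp only [mem_image, mem_filter, mem_powerset]
  constructor
  · rintro ⟨hTS, ⟨haT, hmax⟩, hp⟩
    refine ⟨T.erase a, ⟨?_, ?_⟩, ?_⟩
    · intro b hb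
      have hbT := mem_of_mem_erase hb
      exact mem_filter.2 ⟨hTS hbT, hmax b hbT (ne_of_mem_erase hb)⟩
    · rwa [insert_erase haT]
    · rw [insert_erase haT]
  · rintro ⟨B, ⟨⟨hBS, hp⟩, rfl⟩⟩
    have haB : ∀ x ∈ B, a < x := fun x hx => (mem_filter.1 (hBS hx)).2
    refine ⟨?_, ⟨mem_insert_self a B, ?_⟩, hp⟩
    · intro x hx
      rcases mem_insert.1 hx with rfl | h
      · exact ha
      · exact (mem_filter.1 (hBS h)).1
    · intro b hb hne
      rcases mem_insert.1 hb with rfl | h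
      · exact absurd rfl hne
      · exact haB b h

lemma insert_injOn_powerset {a : α} {L : Finset α} (haL : a ∉ L) :
    Set.InjOn (insert a) (L.powerset : Set (Finset α)) := by
  intro B hB B' hB' h
  simp only [coe_powerset, Set.mem_preimage, Set.mem_powerset_iff, coe_subset] at hB hB'
  have hx : ∀ x, x ∈ B ↔ x ∈ B' := by
    intro x
    constructor
    · intro hxB
      have : x ∈ insert a B' := h ▸ mem_insert_of_mem hxB
      rcases mem_insert.1 this with rfl | hh
      · exact absurd hxB (fun hc => haL (hB hc))
      · exact hh
    · intro hxB
      have : x ∈ insert a B := h ▸ mem_insert_of_mem hxB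
      rcases mem_insert.1 this with rfl | hh
      · exact absurd hxB (fun hc => haL (hB' hc))
      · exact hh
  exact Finset.ext hx

lemma sum_prod_ite (L : Finset α) (t : α → ℝ) :
    ∑ B ∈ L.powerset, ∏ x ∈ L, (if x ∈ B then t x else 1 - t x) = 1 := by
  have h : ∀ B ∈ L.powerset,
      ∏ x ∈ L, (if x ∈ B then t x else 1 - t x)
        = (∏ x ∈ B, t x) * ∏ x ∈ L \ B, (1 - t x) := by
    intro B hB
    rw [mem_powerset] at hB
    have : ∏ x ∈ L, (if x ∈ B then t x else 1 - t x)
        = ∏ x ∈ B ∪ L \ B, (if x ∈ B then t x else 1 - t x) := by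
      rw [Finset.union_sdiff_of_subset hB]
    rw [this, Finset.prod_union disjoint_sdiff]
    congr 1
    · exact Finset.prod_congr rfl fun x hx => if_pos hx
    · refine Finset.prod_congr rfl fun x hx => if_neg ?_
      exact (Finset.mem_sdiff.1 hx).2
  rw [Finset.sum_congr rfl h, ← Finset.prod_add]
  simp

lemma sum_prod_ite_marginal (L : Finset α) (t : α → ℝ) {a : α} (ha : a ∈ L) :
    ∑ B ∈ L.powerset.filter (fun B => a ∈ B),
      ∏ x ∈ L, (if x ∈ B then t x else 1 - t x) = t a := by
  have hsplit := Finset.sum_filter_add_sum_filter_not L.powerset (fun B => a ∈ B)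
    (fun B => ∏ x ∈ L, (if x ∈ B then t x else 1 - t x))
  have htot := sum_prod_ite L t
  have hnot : ∑ B ∈ L.powerset.filter (fun B => a ∉ B),
      ∏ x ∈ L, (if x ∈ B then t x else 1 - t x) = 1 - t a := by
    have hset : L.powerset.filter (fun B => a ∉ B) = (L.erase a).powerset := by
      ext B
      simp only [mem_filter, mem_powerset, Finset.subset_erase]
    rw [hset]
    have hterm : ∀ B ∈ (L.erase a).powerset,
        ∏ x ∈ L, (if x ∈ B then t x else 1 - t x)
          = (1 - t a) * ∏ x ∈ L.erase a, (if x ∈ B then t x else 1 - t x) := by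
      intro B hB
      rw [mem_powerset, Finset.subset_erase] at hB
      rw [← Finset.mul_prod_erase L _ ha, if_neg hB.2]
    rw [Finset.sum_congr rfl hterm, ← Finset.mul_sum]
    have := sum_prod_ite (L.erase a) t
    rw [this, mul_one]
  have : ∑ B ∈ L.powerset.filter (fun B => a ∈ B),
      ∏ x ∈ L, (if x ∈ B then t x else 1 - t x) + (1 - t a) = 1 := by
    rw [← hnot, hsplit, htot]
  linarith

variable (π : α → Finset α → ℝ)

/-- strict upper-contour sum -/
noncomputable def upS (a : α) (S : Finset α) : ℝ := ∑ b ∈ S.filter (fun b => b < a), π b S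

/-- maximum choice probability over supersets -/
noncomputable def fma (a : α) (S : Finset α) : ℝ :=
  ((Finset.univ : Finset (Finset α)).filter (fun S' => S ⊆ S')).sup'
    ⟨S, by simp⟩ (fun S' => π a S')

noncomputable def tt (a : α) (S : Finset α) : ℝ :=
  if upS π a S = 0 then 0 else (fma π a S - π a S) / upS π a S

noncomputable def mu (T S : Finset α) : ℝ :=
  if h : T.Nonempty ∧ T ⊆ S then
    π (T.min' h.1) S *
      ∏ x ∈ S.filter (fun x => T.min' h.1 < x),
        (if x ∈ T then tt π x S else 1 - tt π x S)
  else 0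

lemma fma_ge (a : α) (S : Finset α) : π a S ≤ fma π a S :=
  Finset.le_sup' _ (by simp)

lemma fma_mono (a : α) {T S : Finset α} (hTS : T ⊆ S) : fma π a S ≤ fma π a T := by
  refine Finset.sup'_le _ _ fun S' hS' => ?_
  simp only [mem_filter] at hS'
  exact Finset.le_sup' _ (by simp [hTS.trans hS'.2])

lemma mu_insert {a : α} {S B : Finset α} (ha : a ∈ S) (hB : B ⊆ S.filter (fun x => a < x)) :
    mu π (insert a B) S =
      π a S * ∏ x ∈ S.filter (fun x => a < x), (if x ∈ B then tt π x S else 1 - tt π x S) := by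
  have hsub : insert a B ⊆ S := by
    intro x hx
    rcases mem_insert.1 hx with rfl | h
    · exact ha
    · exact (mem_filter.1 (hB h)).1
  have hne : (insert a B).Nonempty := insert_nonempty a B
  have hmin : (insert a B).min' hne = a :=
    min'_insert_eq (fun x hx => (mem_filter.1 (hB hx)).2)
  rw [mu, dif_pos ⟨hne, hsub⟩]
  congr 1
  · rw [hmin]
  · rw [hmin]
    refine Finset.prod_congr rfl fun x hx => ?_
    have hxa : x ≠ a := fun h => absurd (mem_filter.1 hx).2 (h ▸ lt_irrefl a)
    by_cases hxB : x ∈ B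
    · rw [if_pos (mem_insert_of_mem hxB), if_pos hxB]
    · rw [if_neg (fun hc => hxB ((mem_insert.1 hc).resolve_left hxa)), if_neg hxB]

end Construction

section Main
variable {α : Type*} [Fintype α] [DecidableEq α] [LinearOrder α]
variable {π : α → Finset α → ℝ}

lemma piUpper_lt_eq (hπ : IsChoiceRule π) {a : α} {S : Finset α} (ha : a ∈ S) :
    piUpper π (· < ·) a S = π a S + upS π a S := by
  rw [piUpper, Finset.filter_congr_decidable, Finset.sum_filter, upS, Finset.sum_filter]
  have key : ∀ b ∈ S, (if b < a ∨ b = a then π b S else 0)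
      = (if b = a then π a S else 0) + (if b < a then π b S else 0) := by
    intro b _
    rcases eq_or_ne b a with rfl | h
    · simp [lt_irrefl]
    · by_cases hlt : b < a <;> simp [h, hlt]
  rw [Finset.sum_congr rfl key, Finset.sum_add_distrib,
    Finset.sum_ite_eq' S a (fun _ => π a S), if_pos ha]

lemma fma_le (hπ : IsChoiceRule π) (hAC : SatisfiesAC π (· < ·)) {a : α} {S : Finset α}
    (ha : a ∈ S) : fma π a S ≤ π a S + upS π a S := by
  rw [← piUpper_lt_eq hπ ha]
  refine Finset.sup'_le _ _ fun S' hS' => ?_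
  simp only [mem_filter] at hS'
  exact hAC a S S' ha hS'.2

lemma upS_nonneg (hπ : IsChoiceRule π) {a : α} {S : Finset α} (ha : a ∈ S) :
    0 ≤ upS π a S := by
  refine Finset.sum_nonneg fun b hb => ?_
  exact ((hπ S ⟨a, ha⟩).1 b (mem_filter.1 hb).1)

lemma tt_nonneg (hπ : IsChoiceRule π) {a : α} {S : Finset α} (ha : a ∈ S) :
    0 ≤ tt π a S := by
  rw [tt]
  split_ifs with h
  · exact le_rfl
  · exact div_nonneg (by linarith [fma_ge π a S]) (upS_nonneg hπ ha)

lemma tt_le_one (hπ : IsChoiceRule π) (hAC : SatisfiesAC π (· < ·)) {a : α} {S : Finset α}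
    (ha : a ∈ S) : tt π a S ≤ 1 := by
  rw [tt]
  split_ifs with h
  · exact zero_le_one
  · rw [div_le_one (lt_of_le_of_ne (upS_nonneg hπ ha) (Ne.symm h))]
    linarith [fma_le hπ hAC ha]

lemma tt_mul_upS (hπ : IsChoiceRule π) (hAC : SatisfiesAC π (· < ·)) {a : α} {S : Finset α}
    (ha : a ∈ S) : π a S + tt π a S * upS π a S = fma π a S := by
  rw [tt]
  split_ifs with h
  · have h1 := fma_le hπ hAC ha
    have h2 := fma_ge π a S
    rw [h] at h1
    linarith
  · rw [div_mul_cancel₀ _ h]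
    ring

lemma mu_nonneg (hπ : IsChoiceRule π) (hAC : SatisfiesAC π (· < ·)) {T S : Finset α}
    (hT : T.Nonempty) (hTS : T ⊆ S) : 0 ≤ mu π T S := by
  rw [mu, dif_pos ⟨hT, hTS⟩]
  refine mul_nonneg ((hπ S (hT.mono hTS)).1 _ (hTS (T.min'_mem hT))) ?_
  refine Finset.prod_nonneg fun x hx => ?_
  have hxS : x ∈ S := (mem_filter.1 hx).1
  split_ifs
  · exact tt_nonneg hπ hxS
  · linarith [tt_le_one hπ hAC hxS]

/-- Representation sum for `mu`. -/
lemma mu_rep (hπ : IsChoiceRule π) {a : α} {S : Finset α} (ha : a ∈ S) :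
    ∑ T ∈ S.powerset, (if IsMaxOf (· < ·) a T then mu π T S else 0) = π a S := by
  rw [← Finset.sum_filter]
  have hfil := filter_isMaxOf_eq_image (S := S) ha (fun _ => True)
  simp only [and_true] at hfil
  simp only [Finset.filter_true] at hfil
  rw [hfil, Finset.sum_image (fun B hB B' hB' h =>
    insert_injOn_powerset (a := a) (by simp) (Finset.mem_coe.mpr hB)
      (Finset.mem_coe.mpr hB') h)]
  have key : ∀ B ∈ (S.filter (fun x => a < x)).powerset,
      mu π (insert a B) S = π a S *
        ∏ x ∈ S.filter (fun x => a < x), (if x ∈ B then tt π x S else 1 - tt π x S) :=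
    fun B hB => mu_insert π ha (mem_powerset.1 hB)
  rw [Finset.sum_congr rfl key, ← Finset.mul_sum, sum_prod_ite, mul_one]

/-- every nonempty subset has a unique `IsMaxOf` witness (under `<`): sum picks it out. -/
lemma sum_isMaxOf_pick {S T : Finset α} (hT : T.Nonempty) (hTS : T ⊆ S) (c : ℝ) :
    ∑ b ∈ S, (if IsMaxOf (· < ·) b T then c else 0) = c := by
  have key : ∀ b, IsMaxOf (· < ·) b T ↔ b = T.min' hT := by
    intro b
    rw [isMaxOf_lt_iff]
    constructor
    · rintro ⟨h, rfl⟩; rfl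
    · rintro rfl; exact ⟨hT, rfl⟩
  have : ∀ b ∈ S, (if IsMaxOf (· < ·) b T then c else 0)
      = (if b = T.min' hT then c else 0) := fun b _ => if_congr (key b) rfl rfl
  rw [Finset.sum_congr rfl this, Finset.sum_ite_eq' S (T.min' hT) (fun _ => c),
    if_pos (hTS (T.min'_mem hT))]

lemma mu_sum_one (hπ : IsChoiceRule π) {S : Finset α} (hS : S.Nonempty) :
    ∑ T ∈ S.powerset.filter (fun T => T.Nonempty), mu π T S = 1 := by
  have h1 : ∀ T ∈ S.powerset.filter (fun T => T.Nonempty),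
      mu π T S = ∑ b ∈ S, (if IsMaxOf (· < ·) b T then mu π T S else 0) := by
    intro T hT
    rw [mem_filter, mem_powerset] at hT
    exact (sum_isMaxOf_pick hT.2 hT.1 _).symm
  rw [Finset.sum_congr rfl h1, Finset.sum_comm]
  have h2 : ∀ b ∈ S, ∑ T ∈ S.powerset.filter (fun T => T.Nonempty),
      (if IsMaxOf (· < ·) b T then mu π T S else 0) = π b S := by
    intro b hb
    rw [← mu_rep hπ hb]
    refine Finset.sum_subset (Finset.filter_subset _ _) fun T hT hT2 => ?_
    rw [mem_filter] at hT2
    rw [if_neg (fun hc : IsMaxOf (· < ·) b T => hT2 ⟨hT, ⟨b, hc.1⟩⟩)]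
  rw [Finset.sum_congr rfl h2]
  exact (hπ S hS).2.2

lemma mu_isAttentionRule (hπ : IsChoiceRule π) (hAC : SatisfiesAC π (· < ·)) :
    IsAttentionRule (mu π) := by
  intro S hS
  refine ⟨fun T hT hTS => mu_nonneg hπ hAC hT hTS, fun T hT => dif_neg hT, mu_sum_one hπ hS⟩

lemma attFreq_mu (hπ : IsChoiceRule π) (hAC : SatisfiesAC π (· < ·)) {a : α} {S : Finset α}
    (ha : a ∈ S) : attFreq (mu π) a S = fma π a S := by
  rw [attFreq]
  have h1 : ∀ T ∈ S.powerset.filter (fun T => a ∈ T),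
      mu π T S = ∑ b ∈ S, (if IsMaxOf (· < ·) b T then mu π T S else 0) := by
    intro T hT
    rw [mem_filter, mem_powerset] at hT
    exact (sum_isMaxOf_pick ⟨a, hT.2⟩ hT.1 _).symm
  rw [Finset.sum_congr rfl h1, Finset.sum_comm]
  have h2 : ∀ b ∈ S, ∑ T ∈ S.powerset.filter (fun T => a ∈ T),
      (if IsMaxOf (· < ·) b T then mu π T S else 0)
      = (if b = a then π a S else 0) + (if b < a then π b S * tt π a S else 0) := by
    intro b hb
    rcases eq_or_ne b a with rfl | hne
    · rw [if_pos rfl, if_neg (lt_irrefl b), add_zero]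
      rw [← mu_rep hπ hb]
      refine Finset.sum_subset (Finset.filter_subset _ _) fun T hT hT2 => ?_
      rw [mem_filter] at hT2
      exact if_neg (fun hc : IsMaxOf (· < ·) b T => hT2 ⟨hT, hc.1⟩)
    · rw [if_neg hne, zero_add]
      by_cases hlt : b < a
      · rw [if_pos hlt]
        have hfil : (S.powerset.filter (fun T => a ∈ T)).filter
              (fun T => IsMaxOf (· < ·) b T)
            = ((S.filter (fun x => b < x)).powerset.filter
                (fun B => a ∈ B)).image (insert b) := by
          ext T
          simp only [mem_filter, mem_powerset, mem_image]
          constructor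
          · rintro ⟨⟨hTS, haT⟩, hbT, hmax⟩
            refine ⟨T.erase b, ⟨⟨?_, ?_⟩, ?_⟩⟩
            · intro x hx
              exact mem_filter.2 ⟨hTS (mem_of_mem_erase hx),
                hmax x (mem_of_mem_erase hx) (ne_of_mem_erase hx)⟩
            · exact mem_erase.2 ⟨hne.symm, haT⟩
            · exact insert_erase hbT
          · rintro ⟨B, ⟨⟨hBS, haB⟩, rfl⟩⟩
            have hBlt : ∀ x ∈ B, b < x := fun x hx => (mem_filter.1 (hBS hx)).2
            refine ⟨⟨?_, mem_insert_of_mem haB⟩, mem_insert_self b B, ?_⟩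
            · intro x hx
              rcases mem_insert.1 hx with rfl | h
              · exact hb
              · exact (mem_filter.1 (hBS h)).1
            · intro c hc hcb
              rcases mem_insert.1 hc with rfl | h
              · exact absurd rfl hcb
              · exact hBlt c h
        rw [← Finset.sum_filter, hfil, Finset.sum_image (fun B hB B' hB' h =>
          insert_injOn_powerset (a := b) (by simp)
            (Finset.mem_coe.mpr (Finset.mem_of_mem_filter _ hB))
            (Finset.mem_coe.mpr (Finset.mem_of_mem_filter _ hB')) h)]
        have key : ∀ B ∈ (S.filter (fun x => b < x)).powerset.filter (fun B => a ∈ B),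
            mu π (insert b B) S = π b S *
              ∏ x ∈ S.filter (fun x => b < x),
                (if x ∈ B then tt π x S else 1 - tt π x S) :=
          fun B hB => mu_insert π hb (mem_powerset.1 (Finset.mem_of_mem_filter _ hB))
        rw [Finset.sum_congr rfl key, ← Finset.mul_sum,
          sum_prod_ite_marginal _ _ (mem_filter.2 ⟨ha, hlt⟩)]
      · rw [if_neg hlt]
        refine Finset.sum_eq_zero fun T hT => ?_
        rw [mem_filter] at hT
        refine if_neg fun hc => ?_
        exact hlt (hc.2 a hT.2 hne.symm)
  rw [Finset.sum_congr rfl h2, Finset.sum_add_distrib,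
    Finset.sum_ite_eq' S a (fun _ => π a S), if_pos ha, ← Finset.sum_filter,
    ← Finset.sum_mul, ← upS, ← tt_mul_upS hπ hAC ha]
  ring

lemma mu_AO (hπ : IsChoiceRule π) (hAC : SatisfiesAC π (· < ·)) :
    AttentionOverload (mu π) := by
  intro a T S haT hTS
  rw [attFreq_mu hπ hAC (hTS haT), attFreq_mu hπ hAC haT]
  exact fma_mono π a hTS

lemma mu_represents (hπ : IsChoiceRule π) (hAC : SatisfiesAC π (· < ·)) :
    Represents (· < ·) (mu π) π :=
  ⟨mu_isAttentionRule hπ hAC, fun _ _ a ha => (mu_rep hπ ha).symm⟩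

lemma AC_of_rep (hπ : IsChoiceRule π) {μ : Finset α → Finset α → ℝ}
    (hAO : AttentionOverload μ) (hrep : Represents (· < ·) μ π) :
    SatisfiesAC π (· < ·) := by
  intro a T S haT hTS
  have hT : T.Nonempty := ⟨a, haT⟩
  have hS : S.Nonempty := hT.mono hTS
  obtain ⟨hatt, hval⟩ := hrep
  have step1 : π a S ≤ attFreq μ a S := by
    rw [hval S hS a (hTS haT), ← Finset.sum_filter, attFreq]
    refine Finset.sum_le_sum_of_subset_of_nonneg ?_ ?_
    · intro T' hT'
      rw [mem_filter] at hT' ⊢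
      exact ⟨hT'.1, hT'.2.1⟩
    · intro T' hT' _
      rw [mem_filter, mem_powerset] at hT'
      exact (hatt S hS).1 T' ⟨a, hT'.2⟩ hT'.1
  have step2 : attFreq μ a S ≤ attFreq μ a T := hAO a T S haT hTS
  have step3 : attFreq μ a T ≤ piUpper π (· < ·) a T := by
    rw [piUpper, Finset.filter_congr_decidable]
    have hexp : ∀ b ∈ T.filter (fun b => b < a ∨ b = a), π b T
        = ∑ T' ∈ T.powerset, (if IsMaxOf (· < ·) b T' then μ T' T else 0) :=
      fun b hb => hval T hT b (mem_filter.1 hb).1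
    rw [Finset.sum_congr rfl hexp, Finset.sum_comm, attFreq]
    have ite_nonneg : ∀ (T' : Finset α), T' ∈ T.powerset → ∀ b : α,
        0 ≤ (if IsMaxOf (· < ·) b T' then μ T' T else 0) := by
      intro T' hT' b
      split_ifs with h
      · exact (hatt T hT).1 T' ⟨b, h.1⟩ (mem_powerset.1 hT')
      · exact le_rfl
    calc ∑ T' ∈ T.powerset.filter (fun T' => a ∈ T'), μ T' T
        ≤ ∑ T' ∈ T.powerset.filter (fun T' => a ∈ T'),
            ∑ b ∈ T.filter (fun b => b < a ∨ b = a),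
              (if IsMaxOf (· < ·) b T' then μ T' T else 0) := by
          refine Finset.sum_le_sum fun T' hT' => ?_
          rw [mem_filter, mem_powerset] at hT'
          have hT'ne : T'.Nonempty := ⟨a, hT'.2⟩
          set b₀ := T'.min' hT'ne with hb₀
          have hmax : IsMaxOf (· < ·) b₀ T' := isMaxOf_lt_iff.2 ⟨hT'ne, rfl⟩
          have hb₀mem : b₀ ∈ T.filter (fun b => b < a ∨ b = a) := by
            refine mem_filter.2 ⟨hT'.1 (T'.min'_mem hT'ne), ?_⟩
            exact (lt_or_eq_of_le (T'.min'_le a hT'.2)).imp id id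
          calc μ T' T = (if IsMaxOf (· < ·) b₀ T' then μ T' T else 0) :=
                (if_pos hmax).symm
            _ ≤ ∑ b ∈ T.filter (fun b => b < a ∨ b = a),
                  (if IsMaxOf (· < ·) b T' then μ T' T else 0) :=
                Finset.single_le_sum
                  (fun b _ => ite_nonneg T' (mem_powerset.2 hT'.1) b) hb₀mem
      _ ≤ ∑ T' ∈ T.powerset, ∑ b ∈ T.filter (fun b => b < a ∨ b = a),
              (if IsMaxOf (· < ·) b T' then μ T' T else 0) := by
          refine Finset.sum_le_sum_of_subset_of_nonneg (Finset.filter_subset _ _)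
            fun T' hT' _ => Finset.sum_nonneg fun b _ => ite_nonneg T' hT' b
  exact step1.trans (step2.trans step3)


end Main
/-- π is an AOM iff AC holds for some preference ordering. -/
theorem isAOM_iff_exists_AC {α : Type*} [Fintype α] [DecidableEq α]
    (π : α → Finset α → ℝ) (hπ : IsChoiceRule π) :
    IsAOM π ↔ ∃ r : α → α → Prop, IsStrictTotalOrder α r ∧ SatisfiesAC π r := by
  constructor
  · rintro ⟨r, μ, hr, hAO, hrep⟩
    refine ⟨r, hr, ?_⟩
    haveI := hr
    haveI : DecidableRel r := fun a b => Classical.dec _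
    letI : LinearOrder α := linearOrderOfSTO r
    exact AC_of_rep hπ hAO hrep
  · rintro ⟨r, hr, hAC⟩
    haveI := hr
    haveI : DecidableRel r := fun a b => Classical.dec _
    letI : LinearOrder α := linearOrderOfSTO r
    exact ⟨r, mu π, hr, mu_AO hπ hAC, mu_represents hπ hAC⟩
end

section
/- (Regularity implies AC for every preference.) Let X be a finite set of alternatives and π a choice rule satisfying regularity, i.e., π(a|S) ≤ π(a|T) whenever a ∈ T ⊆ S. Then for every preference ordering ≻ on X, the pair (π, ≻) satisfies AC; consequently, π has an AOM representation with every preference ordering ≻. -/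
open scoped Classical
open Finset

/-- regularity implies AC, and hence an AOM representation, for every preference. -/
theorem regularity_implies_AC {α : Type*} [Fintype α] [DecidableEq α]
    (π : α → Finset α → ℝ) (hπ : IsChoiceRule π)
    (hreg : ∀ (a : α) (T S : Finset α), a ∈ T → T ⊆ S → π a S ≤ π a T) :
    ∀ r : α → α → Prop, IsStrictTotalOrder α r →
      SatisfiesAC π r ∧
      ∃ μ : Finset α → Finset α → ℝ, AttentionOverload μ ∧ Represents r μ π := by
  intro r hr
  have hAC : SatisfiesAC π r := by
    intro a T S haT hTS
    have haS := hTS haT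
    have hT : T.Nonempty := ⟨a, haT⟩
    refine le_trans (hreg a T S haT hTS) ?_
    unfold piUpper
    have hsub : {a} ⊆ T.filter (fun b => r b a ∨ b = a) := by
      intro x hx
      simp only [Finset.mem_singleton] at hx
      subst hx
      simp [haT]
    calc π a T = ∑ b ∈ ({a} : Finset α), π b T := by simp
      _ ≤ ∑ b ∈ T.filter (fun b => r b a ∨ b = a), π b T := by
          refine Finset.sum_le_sum_of_subset_of_nonneg hsub ?_
          intro i hi _
          exact (hπ T hT).1 i (Finset.mem_filter.mp hi).1
  refine ⟨hAC, ?_⟩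
  set μ : Finset α → Finset α → ℝ :=
    fun T S => ∑ a ∈ S, if T = {a} then π a S else 0 with hμdef
  have hμsing : ∀ (b : α) (S : Finset α), b ∈ S → μ {b} S = π b S := by
    intro b S hbS
    simp only [hμdef]
    rw [Finset.sum_eq_single b]
    · simp
    · intro c hcS hcb
      have : ({b} : Finset α) ≠ {c} := by
        simp [Finset.singleton_injective.ne_iff, Ne.symm hcb]
      simp [this]
    · intro h; exact absurd hbS h
  have hμzero : ∀ (T S : Finset α), (∀ b ∈ S, T ≠ {b}) → μ T S = 0 := by
    intro T S h
    simp only [hμdef]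
    exact Finset.sum_eq_zero (fun b hb => by simp [h b hb])
  have hfreq : ∀ (a : α) (S : Finset α), a ∈ S → attFreq μ a S = π a S := by
    intro a S haS
    unfold attFreq
    simp only [hμdef]
    rw [Finset.sum_comm]
    have h1 : ∀ b ∈ S,
        (∑ T ∈ S.powerset.filter (fun T => a ∈ T), if T = {b} then π b S else 0)
          = if a = b then π b S else 0 := by
      intro b hbS
      rw [Finset.sum_ite_eq' (S.powerset.filter (fun T => a ∈ T)) ({b} : Finset α)
        (fun _ => π b S)]
      by_cases hab : a = b
      · subst hab; simp [haS]
      · simp [Finset.singleton_subset_iff, hbS, Ne.symm hab, hab]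
    rw [Finset.sum_congr rfl h1, Finset.sum_ite_eq S a (fun b => π b S)]
    simp [haS]
  refine ⟨μ, ?_, ?_, ?_⟩
  · -- Attention overload
    intro a T S haT hTS
    have haS := hTS haT
    rw [hfreq a S haS, hfreq a T haT]
    exact hreg a T S haT hTS
  · -- IsAttentionRule
    intro S hS
    refine ⟨?_, ?_, ?_⟩
    · intro T hT hTsub
      simp only [hμdef]
      refine Finset.sum_nonneg (fun b hb => ?_)
      by_cases h : T = {b}
      · simp [h, (hπ S hS).1 b hb]
      · simp [h]
    · intro T hT
      refine hμzero T S (fun b hbS hTb => ?_)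
      exact hT ⟨hTb ▸ Finset.singleton_nonempty b, hTb ▸ Finset.singleton_subset_iff.mpr hbS⟩
    · simp only [hμdef]
      rw [Finset.sum_comm]
      have h1 : ∀ b ∈ S,
          (∑ T ∈ S.powerset.filter (fun T => T.Nonempty), if T = {b} then π b S else 0)
            = π b S := by
        intro b hbS
        rw [Finset.sum_ite_eq' (S.powerset.filter (fun T => T.Nonempty)) ({b} : Finset α)
          (fun _ => π b S)]
        simp [Finset.singleton_subset_iff, hbS]
      rw [Finset.sum_congr rfl h1]
      exact (hπ S hS).2.2
  · -- Representation
    intro S hS a haS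
    have h1 : ∀ T ∈ S.powerset,
        (if IsMaxOf r a T then μ T S else 0) = if T = {a} then π a S else 0 := by
      intro T hTpow
      by_cases hTa : T = {a}
      · have hmax : IsMaxOf r a T := by
          subst hTa
          exact ⟨Finset.mem_singleton_self a, fun b hb hba => absurd (Finset.mem_singleton.mp hb) hba⟩
        rw [if_pos hmax, if_pos hTa, hTa, hμsing a S haS]
      · rw [if_neg hTa]
        by_cases hmax : IsMaxOf r a T
        · rw [if_pos hmax]
          refine hμzero T S (fun b hbS hTb => ?_)
          have : a ∈ ({b} : Finset α) := hTb ▸ hmax.1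
          rw [Finset.mem_singleton.mp this] at hTa
          exact hTa hTb
        · rw [if_neg hmax]
    rw [Finset.sum_congr rfl h1,
      Finset.sum_ite_eq' S.powerset ({a} : Finset α) (fun _ => π a S)]
    simp [Finset.singleton_subset_iff, haS]
end

section
/- (Characterization with Attentive at Binaries.) Let X be a finite set of alternatives, π a choice rule, ≻ a preference ordering on X, and η ∈ [0,1]. Then π is represented by (≻, μ) for some attention rule μ satisfying attention overload and the η-attentive-at-binaries condition (μ({a}|{a,b}) ≤ η and μ({b}|{a,b}) ≤ η for all distinct a, b ∈ X) if and only if (π, ≻) satisfies AC and η-constrained revealed preference (i.e., π(a|{a,b}) > η implies a ≻ b for all distinct a, b ∈ X). -/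
open scoped Classical
open Finset

section AuxAOM

variable {α : Type*} [Fintype α] [DecidableEq α]

/-- Max of `π a` over all supersets of `S`. -/
noncomputable def fmaxAOM (π : α → Finset α → ℝ) (a : α) (S : Finset α) : ℝ :=
  ((univ : Finset α).powerset.filter (fun S' => S ⊆ S')).sup'
    ⟨univ, by simp⟩ (fun S' => π a S')

/-- Target attention frequency. -/
noncomputable def phiAOM (π : α → Finset α → ℝ) (r : α → α → Prop) (η : ℝ)
    (a : α) (S : Finset α) : ℝ :=
  if S.card ≤ 2 then min (piUpper π r a S) (max (fmaxAOM π a S) (1 - η))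
  else fmaxAOM π a S

/-- Inclusion coefficient. -/
noncomputable def tcoefAOM (π : α → Finset α → ℝ) (r : α → α → Prop) (η : ℝ)
    (a : α) (S : Finset α) : ℝ :=
  if π a S < piUpper π r a S then
    (phiAOM π r η a S - π a S) / (piUpper π r a S - π a S)
  else 0

/-- Weight of a consideration set `T` with maximum `b` inside `S`. -/
noncomputable def wgtAOM (π : α → Finset α → ℝ) (r : α → α → Prop) (η : ℝ)
    (b : α) (T S : Finset α) : ℝ :=
  π b S * ∏ a ∈ S.filter (fun a => r b a),
    (if a ∈ T then tcoefAOM π r η a S else 1 - tcoefAOM π r η a S)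

/-- The constructed attention rule. -/
noncomputable def muAOM (π : α → Finset α → ℝ) (r : α → α → Prop) (η : ℝ)
    (T S : Finset α) : ℝ :=
  if T ⊆ S then ∑ b ∈ T, (if IsMaxOf r b T then wgtAOM π r η b T S else 0) else 0

variable {π : α → Finset α → ℝ} {r : α → α → Prop} {η : ℝ}

lemma asymmAOM (hr : IsStrictTotalOrder α r) {a b : α} (h1 : r a b) (h2 : r b a) : False :=
  hr.irrefl a (hr.trans a b a h1 h2)

lemma exists_maxAOM (hr : IsStrictTotalOrder α r) {T : Finset α} (hT : T.Nonempty) :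
    ∃ b, IsMaxOf r b T := by
  classical
  induction T using Finset.induction_on with
  | empty => exact absurd hT (by simp)
  | @insert x s hx ih =>
    rcases s.eq_empty_or_nonempty with rfl | hs
    · exact ⟨x, by simp [IsMaxOf]⟩
    · obtain ⟨b, hb, hmax⟩ := ih hs
      rcases (or_iff_not_imp_left.2 fun h1 => or_iff_not_imp_right.2 fun h2 => hr.trichotomous x b h1 h2 : r x b ∨ x = b ∨ r b x) with h | h | h
      · refine ⟨x, Finset.mem_insert_self _ _, ?_⟩
        intro c hc hcx
        rcases Finset.mem_insert.1 hc with rfl | hc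
        · exact absurd rfl hcx
        · rcases eq_or_ne c b with rfl | hcb
          · exact h
          · exact hr.trans _ _ _ h (hmax c hc hcb)
      · exact absurd (h ▸ hb) hx
      · refine ⟨b, Finset.mem_insert_of_mem hb, ?_⟩
        intro c hc hcb
        rcases Finset.mem_insert.1 hc with rfl | hc
        · exact h
        · exact hmax c hc hcb

lemma max_uniqueAOM (hr : IsStrictTotalOrder α r) {T : Finset α} {b c : α}
    (hb : IsMaxOf r b T) (hc : IsMaxOf r c T) : b = c := by
  by_contra hne
  exact asymmAOM hr (hb.2 c hc.1 (Ne.symm hne)) (hc.2 b hb.1 hne)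

lemma pi_nonnegAOM (hπ : IsChoiceRule π) {a : α} {S : Finset α} (hS : S.Nonempty) :
    0 ≤ π a S := by
  by_cases h : a ∈ S
  · exact (hπ S hS).1 a h
  · exact le_of_eq ((hπ S hS).2.1 a h).symm

lemma pi_le_oneAOM (hπ : IsChoiceRule π) {a : α} {S : Finset α} (hS : S.Nonempty) :
    π a S ≤ 1 := by
  by_cases h : a ∈ S
  · calc π a S ≤ ∑ b ∈ S, π b S :=
        Finset.single_le_sum (fun b hb => (hπ S hS).1 b hb) h
    _ = 1 := (hπ S hS).2.2
  · rw [(hπ S hS).2.1 a h]; norm_num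

lemma piUpper_le_oneAOM (hπ : IsChoiceRule π) {a : α} {S : Finset α} (hS : S.Nonempty) :
    piUpper π r a S ≤ 1 := by
  unfold piUpper
  calc ∑ b ∈ S.filter (fun b => r b a ∨ b = a), π b S
      ≤ ∑ b ∈ S, π b S :=
        Finset.sum_le_sum_of_subset_of_nonneg (Finset.filter_subset _ _)
          (fun b hb _ => (hπ S hS).1 b hb)
    _ = 1 := (hπ S hS).2.2

lemma pi_le_piUpperAOM (hπ : IsChoiceRule π) {a : α} {S : Finset α} (ha : a ∈ S) :
    π a S ≤ piUpper π r a S := by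
  unfold piUpper
  exact Finset.single_le_sum
    (fun b hb => (hπ S ⟨a, ha⟩).1 b (Finset.mem_filter.1 hb).1)
    (Finset.mem_filter.2 ⟨ha, Or.inr rfl⟩)

lemma piUpper_splitAOM (hr : IsStrictTotalOrder α r) {a : α} {S : Finset α} (ha : a ∈ S) :
    piUpper π r a S = π a S + ∑ b ∈ S.filter (fun b => r b a), π b S := by
  unfold piUpper
  have hset : S.filter (fun b => r b a ∨ b = a) = insert a (S.filter (fun b => r b a)) := by
    ext c
    simp only [Finset.mem_filter, Finset.mem_insert]
    constructor
    · rintro ⟨hc, h | h⟩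
      · exact Or.inr ⟨hc, h⟩
      · exact Or.inl h
    · rintro (rfl | ⟨hc, h⟩)
      · exact ⟨ha, Or.inr rfl⟩
      · exact ⟨hc, Or.inl h⟩
  rw [hset, Finset.sum_insert (by simp [hr.irrefl a])]

lemma le_fmaxAOM {a : α} {S S' : Finset α} (h : S ⊆ S') : π a S' ≤ fmaxAOM π a S :=
  Finset.le_sup' _ (by simp [h])

lemma fmax_leAOM {a : α} {S : Finset α} {c : ℝ} (h : ∀ S', S ⊆ S' → π a S' ≤ c) :
    fmaxAOM π a S ≤ c := by
  apply Finset.sup'_le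
  intro S' hS'
  exact h S' (Finset.mem_filter.1 hS').2

lemma fmax_monoAOM {a : α} {T S : Finset α} (h : T ⊆ S) :
    fmaxAOM π a S ≤ fmaxAOM π a T :=
  fmax_leAOM fun S' hS' => le_fmaxAOM (h.trans hS')

lemma fmax_le_piUpperAOM (hAC : SatisfiesAC π r) {a : α} {T S : Finset α}
    (ha : a ∈ T) (hTS : T ⊆ S) : fmaxAOM π a S ≤ piUpper π r a T :=
  fmax_leAOM fun S' hS' => hAC a T S' ha (hTS.trans hS')

lemma pi_le_phiAOM (hπ : IsChoiceRule π) {a : α} {S : Finset α} (ha : a ∈ S) :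
    π a S ≤ phiAOM π r η a S := by
  unfold phiAOM
  split
  · exact le_min (pi_le_piUpperAOM hπ ha)
      (le_max_of_le_left (le_fmaxAOM (Finset.Subset.refl S)))
  · exact le_fmaxAOM (Finset.Subset.refl S)

lemma phi_le_piUpperAOM (hAC : SatisfiesAC π r) {a : α} {S : Finset α} (ha : a ∈ S) :
    phiAOM π r η a S ≤ piUpper π r a S := by
  unfold phiAOM
  split
  · exact min_le_left _ _
  · exact fmax_le_piUpperAOM hAC ha (Finset.Subset.refl S)

lemma phi_le_oneAOM (hπ : IsChoiceRule π) (hAC : SatisfiesAC π r) {a : α} {S : Finset α}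
    (ha : a ∈ S) : phiAOM π r η a S ≤ 1 :=
  (phi_le_piUpperAOM hAC ha).trans (piUpper_le_oneAOM hπ ⟨a, ha⟩)

lemma phi_singletonAOM (hπ : IsChoiceRule π) (hAC : SatisfiesAC π r) {a : α} :
    phiAOM π r η a {a} = 1 := by
  have h1 : π a {a} = 1 := by
    have := (hπ {a} ⟨a, by simp⟩).2.2
    simpa using this
  have hle : phiAOM π r η a {a} ≤ 1 := phi_le_oneAOM hπ hAC (by simp)
  have hge : (1:ℝ) ≤ phiAOM π r η a {a} := by
    have := pi_le_phiAOM (r := r) (η := η) hπ (a := a) (S := {a}) (by simp)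
    linarith [this, h1.symm.le]
  linarith

lemma phi_monoAOM (hπ : IsChoiceRule π) (hAC : SatisfiesAC π r) {a : α} {T S : Finset α}
    (ha : a ∈ T) (hTS : T ⊆ S) : phiAOM π r η a S ≤ phiAOM π r η a T := by
  have haS : a ∈ S := hTS ha
  by_cases hS2 : S.card ≤ 2
  · rcases eq_or_ne T S with rfl | hne
    · exact le_refl _
    · have hT1 : T = {a} := by
        have hlt : T.card < S.card := Finset.card_lt_card (Finset.ssubset_iff_subset_ne.2 ⟨hTS, hne⟩)
        have : T.card ≤ 1 := by omega
        exact Finset.eq_singleton_iff_unique_mem.2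
          ⟨ha, fun x hx => Finset.card_le_one.1 this x hx a ha⟩
      rw [hT1, phi_singletonAOM hπ hAC]
      exact phi_le_oneAOM hπ hAC haS
  · by_cases hT2 : T.card ≤ 2
    · have hphiS : phiAOM π r η a S = fmaxAOM π a S := by unfold phiAOM; rw [if_neg hS2]
      rw [hphiS]
      unfold phiAOM
      rw [if_pos hT2]
      exact le_min (fmax_le_piUpperAOM hAC ha hTS)
        (le_max_of_le_left (fmax_monoAOM hTS))
    · unfold phiAOM
      rw [if_neg hS2, if_neg hT2]
      exact fmax_monoAOM hTS

lemma tcoef_nonnegAOM (hπ : IsChoiceRule π) {a : α} {S : Finset α} (ha : a ∈ S) :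
    0 ≤ tcoefAOM π r η a S := by
  unfold tcoefAOM
  split
  · rename_i h
    apply div_nonneg
    · linarith [pi_le_phiAOM (r := r) (η := η) hπ ha]
    · linarith
  · exact le_refl 0

lemma tcoef_le_oneAOM (hπ : IsChoiceRule π) (hAC : SatisfiesAC π r) {a : α} {S : Finset α}
    (ha : a ∈ S) : tcoefAOM π r η a S ≤ 1 := by
  unfold tcoefAOM
  split
  · rename_i h
    rw [div_le_one (by linarith)]
    linarith [phi_le_piUpperAOM (η := η) hAC ha]
  · norm_num

lemma tcoef_specAOM (hπ : IsChoiceRule π) (hAC : SatisfiesAC π r) {a : α} {S : Finset α}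
    (ha : a ∈ S) :
    tcoefAOM π r η a S * (piUpper π r a S - π a S) = phiAOM π r η a S - π a S := by
  unfold tcoefAOM
  split
  · rename_i h
    rw [div_mul_eq_mul_div, mul_div_assoc, div_self (by linarith), mul_one]
  · rename_i h
    have h1 : piUpper π r a S = π a S :=
      le_antisymm (not_lt.1 h) (pi_le_piUpperAOM hπ ha)
    have h2 : phiAOM π r η a S = π a S :=
      le_antisymm (h1 ▸ phi_le_piUpperAOM hAC ha) (pi_le_phiAOM hπ ha)
    rw [h1, h2]; ring
lemma prod_ite_memAOM {s B : Finset α} (hB : B ⊆ s) (f g : α → ℝ) :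
    ∏ a ∈ s, (if a ∈ B then f a else g a) = (∏ a ∈ B, f a) * ∏ a ∈ s \ B, g a := by
  calc ∏ a ∈ s, (if a ∈ B then f a else g a)
      = ∏ a ∈ B ∪ s \ B, (if a ∈ B then f a else g a) := by
        rw [Finset.union_sdiff_of_subset hB]
    _ = (∏ a ∈ B, if a ∈ B then f a else g a) *
        ∏ a ∈ s \ B, (if a ∈ B then f a else g a) :=
        Finset.prod_union Finset.disjoint_sdiff
    _ = (∏ a ∈ B, f a) * ∏ a ∈ s \ B, g a := by
        congr 1
        · exact Finset.prod_congr rfl fun a ha => if_pos ha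
        · exact Finset.prod_congr rfl fun a ha => if_neg (Finset.mem_sdiff.1 ha).2

lemma sum_maxsetsAOM (hr : IsStrictTotalOrder α r) {b : α} {S : Finset α} (hb : b ∈ S)
    (F : Finset α → ℝ) :
    ∑ T ∈ S.powerset, (if IsMaxOf r b T then F T else 0)
      = ∑ B ∈ (S.filter (fun a => r b a)).powerset, F (insert b B) := by
  rw [← Finset.sum_filter]
  refine Finset.sum_nbij' (fun T => T.erase b) (fun B => insert b B) ?_ ?_ ?_ ?_ ?_
  · intro T hT
    rw [Finset.mem_filter, Finset.mem_powerset] at hT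
    rw [Finset.mem_powerset]
    intro c hc
    rw [Finset.mem_erase] at hc
    exact Finset.mem_filter.2 ⟨hT.1 hc.2, hT.2.2 c hc.2 hc.1⟩
  · intro B hB
    rw [Finset.mem_powerset] at hB
    rw [Finset.mem_filter, Finset.mem_powerset]
    refine ⟨?_, Finset.mem_insert_self _ _, ?_⟩
    · intro c hc
      rcases Finset.mem_insert.1 hc with rfl | hc
      · exact hb
      · exact Finset.filter_subset _ _ (hB hc)
    · intro c hc hcb
      rcases Finset.mem_insert.1 hc with rfl | hc
      · exact absurd rfl hcb
      · exact (Finset.mem_filter.1 (hB hc)).2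
  · intro T hT
    rw [Finset.mem_filter] at hT
    exact Finset.insert_erase hT.2.1
  · intro B hB
    rw [Finset.mem_powerset] at hB
    refine Finset.erase_insert fun hbB => ?_
    exact hr.irrefl b (Finset.mem_filter.1 (hB hbB)).2
  · intro T hT
    rw [Finset.mem_filter] at hT
    rw [Finset.insert_erase hT.2.1]

lemma wgt_insertAOM (hr : IsStrictTotalOrder α r) {b : α} {S B : Finset α}
    (hB : B ⊆ S.filter (fun a => r b a)) :
    wgtAOM π r η b (insert b B) S
      = π b S * ((∏ a ∈ B, tcoefAOM π r η a S) *
          ∏ a ∈ S.filter (fun a => r b a) \ B, (1 - tcoefAOM π r η a S)) := by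
  unfold wgtAOM
  congr 1
  rw [← prod_ite_memAOM hB]
  refine Finset.prod_congr rfl fun a ha => ?_
  have hab : a ≠ b := fun h => hr.irrefl b (h ▸ (Finset.mem_filter.1 ha).2)
  simp [Finset.mem_insert, hab]

/-- Total weight of all consideration sets with maximum `b` is `π b S`. -/
lemma sum_wgtAOM (hr : IsStrictTotalOrder α r) {b : α} {S : Finset α} (hb : b ∈ S) :
    ∑ T ∈ S.powerset, (if IsMaxOf r b T then wgtAOM π r η b T S else 0) = π b S := by
  rw [sum_maxsetsAOM hr hb]
  set L := S.filter (fun a => r b a) with hL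
  calc ∑ B ∈ L.powerset, wgtAOM π r η b (insert b B) S
      = ∑ B ∈ L.powerset, π b S * ((∏ a ∈ B, tcoefAOM π r η a S) *
          ∏ a ∈ L \ B, (1 - tcoefAOM π r η a S)) := by
        refine Finset.sum_congr rfl fun B hB => ?_
        exact wgt_insertAOM hr (Finset.mem_powerset.1 hB)
    _ = π b S * ∑ B ∈ L.powerset, (∏ a ∈ B, tcoefAOM π r η a S) *
          ∏ a ∈ L \ B, (1 - tcoefAOM π r η a S) := by rw [Finset.mul_sum]
    _ = π b S * ∏ a ∈ L, (tcoefAOM π r η a S + (1 - tcoefAOM π r η a S)) := by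
        rw [Finset.prod_add]
    _ = π b S := by
        have : ∀ a ∈ L, tcoefAOM π r η a S + (1 - tcoefAOM π r η a S) = 1 := by
          intro a _; ring
        rw [Finset.prod_congr rfl this, Finset.prod_const_one, mul_one]

/-- Weight of max-`b` sets containing `a`, when `r b a`. -/
lemma sum_wgt_memAOM (hr : IsStrictTotalOrder α r) {a b : α} {S : Finset α}
    (hb : b ∈ S) (ha : a ∈ S) (hba : r b a) :
    ∑ T ∈ S.powerset.filter (fun T => a ∈ T),
        (if IsMaxOf r b T then wgtAOM π r η b T S else 0)
      = π b S * tcoefAOM π r η a S := by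
  rw [Finset.sum_filter]
  have hstep : ∀ T ∈ S.powerset,
      (if a ∈ T then (if IsMaxOf r b T then wgtAOM π r η b T S else 0) else 0)
        = (if IsMaxOf r b T then (if a ∈ T then wgtAOM π r η b T S else 0) else 0) := by
    intro T _
    by_cases h1 : a ∈ T <;> by_cases h2 : IsMaxOf r b T <;> simp [h1, h2]
  rw [Finset.sum_congr rfl hstep, sum_maxsetsAOM hr hb]
  set L := S.filter (fun a => r b a) with hL
  have haL : a ∈ L := Finset.mem_filter.2 ⟨ha, hba⟩
  have hab : a ≠ b := fun h => hr.irrefl b (h ▸ hba)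
  set g : α → ℝ := fun c => if c = a then 0 else 1 - tcoefAOM π r η c S with hg
  calc ∑ B ∈ L.powerset, (if a ∈ insert b B then wgtAOM π r η b (insert b B) S else 0)
      = ∑ B ∈ L.powerset, π b S * ((∏ c ∈ B, tcoefAOM π r η c S) * ∏ c ∈ L \ B, g c) := by
        refine Finset.sum_congr rfl fun B hB => ?_
        have hBL : B ⊆ L := Finset.mem_powerset.1 hB
        by_cases haB : a ∈ B
        · rw [if_pos (Finset.mem_insert_of_mem haB), wgt_insertAOM hr hBL]
          congr 2
          refine Finset.prod_congr rfl fun c hc => ?_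
          have : c ≠ a := by
            intro h; subst h
            exact (Finset.mem_sdiff.1 hc).2 haB
          rw [hg]; simp [this]
        · rw [if_neg (by simp [hab, haB])]
          have : ∏ c ∈ L \ B, g c = 0 :=
            Finset.prod_eq_zero (Finset.mem_sdiff.2 ⟨haL, haB⟩) (by rw [hg]; simp)
          rw [this, mul_zero, mul_zero]
    _ = π b S * ∑ B ∈ L.powerset, (∏ c ∈ B, tcoefAOM π r η c S) * ∏ c ∈ L \ B, g c := by
        rw [Finset.mul_sum]
    _ = π b S * ∏ c ∈ L, (tcoefAOM π r η c S + g c) := by rw [Finset.prod_add]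
    _ = π b S * tcoefAOM π r η a S := by
        congr 1
        rw [Finset.prod_eq_single_of_mem a haL]
        · rw [hg]; simp
        · intro c _ hc
          rw [hg]; simp [hc]

lemma sum_wgt_selfAOM (hr : IsStrictTotalOrder α r) {a : α} {S : Finset α} (ha : a ∈ S) :
    ∑ T ∈ S.powerset.filter (fun T => a ∈ T),
        (if IsMaxOf r a T then wgtAOM π r η a T S else 0) = π a S := by
  rw [Finset.sum_filter]
  have hstep : ∀ T ∈ S.powerset,
      (if a ∈ T then (if IsMaxOf r a T then wgtAOM π r η a T S else 0) else 0)
        = (if IsMaxOf r a T then wgtAOM π r η a T S else 0) := by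
    intro T _
    by_cases h2 : IsMaxOf r a T
    · rw [if_pos h2.1]
    · by_cases h1 : a ∈ T <;> simp [h1, h2]
  rw [Finset.sum_congr rfl hstep, sum_wgtAOM hr ha]

lemma sum_wgt_noneAOM {a b : α} {S : Finset α} (hba : ¬ r b a) (hab : b ≠ a) :
    ∑ T ∈ S.powerset.filter (fun T => a ∈ T),
        (if IsMaxOf r b T then wgtAOM π r η b T S else 0) = 0 := by
  refine Finset.sum_eq_zero fun T hT => ?_
  rw [Finset.mem_filter] at hT
  rw [if_neg]
  intro hmax
  exact hba (hmax.2 a hT.2 (Ne.symm hab))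
lemma mu_of_maxAOM (hr : IsStrictTotalOrder α r) {b : α} {T S : Finset α}
    (hTS : T ⊆ S) (hmax : IsMaxOf r b T) : muAOM π r η T S = wgtAOM π r η b T S := by
  unfold muAOM
  rw [if_pos hTS, Finset.sum_eq_single_of_mem b hmax.1]
  · rw [if_pos hmax]
  · intro c hc hcb
    rw [if_neg]
    intro hmc
    exact hcb (max_uniqueAOM hr hmc hmax)

lemma mu_eq_sumAOM {T S : Finset α} (hTS : T ⊆ S) :
    muAOM π r η T S = ∑ b ∈ S, (if IsMaxOf r b T then wgtAOM π r η b T S else 0) := by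
  unfold muAOM
  rw [if_pos hTS]
  refine Finset.sum_subset hTS fun b _ hbT => ?_
  exact if_neg fun h => hbT h.1

lemma mu_repAOM (hr : IsStrictTotalOrder α r) {a : α} {S : Finset α} (ha : a ∈ S) :
    ∑ T ∈ S.powerset, (if IsMaxOf r a T then muAOM π r η T S else 0) = π a S := by
  have hstep : ∀ T ∈ S.powerset,
      (if IsMaxOf r a T then muAOM π r η T S else 0)
        = (if IsMaxOf r a T then wgtAOM π r η a T S else 0) := by
    intro T hT
    by_cases h : IsMaxOf r a T
    · rw [if_pos h, if_pos h, mu_of_maxAOM hr (Finset.mem_powerset.1 hT) h]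
    · rw [if_neg h, if_neg h]
  rw [Finset.sum_congr rfl hstep, sum_wgtAOM hr ha]

lemma mu_emptyAOM {S : Finset α} : muAOM π r η ∅ S = 0 := by
  unfold muAOM
  rw [if_pos (Finset.empty_subset S), Finset.sum_empty]

lemma mu_totalAOM (hπ : IsChoiceRule π) (hr : IsStrictTotalOrder α r) {S : Finset α}
    (hS : S.Nonempty) :
    ∑ T ∈ S.powerset.filter (fun T => T.Nonempty), muAOM π r η T S = 1 := by
  have h1 : ∑ T ∈ S.powerset, muAOM π r η T S = 1 := by
    calc ∑ T ∈ S.powerset, muAOM π r η T S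
        = ∑ T ∈ S.powerset, ∑ b ∈ S, (if IsMaxOf r b T then wgtAOM π r η b T S else 0) :=
          Finset.sum_congr rfl fun T hT => mu_eq_sumAOM (Finset.mem_powerset.1 hT)
      _ = ∑ b ∈ S, ∑ T ∈ S.powerset, (if IsMaxOf r b T then wgtAOM π r η b T S else 0) :=
          Finset.sum_comm
      _ = ∑ b ∈ S, π b S := Finset.sum_congr rfl fun b hb => sum_wgtAOM hr hb
      _ = 1 := (hπ S hS).2.2
  rw [← h1]
  refine Finset.sum_subset (Finset.filter_subset _ _) fun T hT hT' => ?_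
  have : T = ∅ := by
    rw [Finset.mem_filter] at hT'
    push_neg at hT'
    rcases T.eq_empty_or_nonempty with h | h
    · exact h
    · exact hT' hT
  rw [this, mu_emptyAOM]

lemma mu_nonnegAOM (hπ : IsChoiceRule π) (hr : IsStrictTotalOrder α r)
    (hAC : SatisfiesAC π r) {T S : Finset α} (hT : T.Nonempty) (hTS : T ⊆ S) :
    0 ≤ muAOM π r η T S := by
  obtain ⟨b, hb⟩ := exists_maxAOM hr hT
  rw [mu_of_maxAOM hr hTS hb]
  have hS : S.Nonempty := hT.mono hTS
  refine mul_nonneg (pi_nonnegAOM hπ hS) (Finset.prod_nonneg fun c hc => ?_)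
  have hcS : c ∈ S := (Finset.mem_filter.1 hc).1
  split
  · exact tcoef_nonnegAOM hπ hcS
  · linarith [tcoef_le_oneAOM (η := η) hπ hAC hcS]

lemma attFreq_muAOM (hπ : IsChoiceRule π) (hr : IsStrictTotalOrder α r)
    (hAC : SatisfiesAC π r) {a : α} {S : Finset α} (ha : a ∈ S) :
    attFreq (muAOM π r η) a S = phiAOM π r η a S := by
  unfold attFreq
  calc ∑ T ∈ S.powerset.filter (fun T => a ∈ T), muAOM π r η T S
      = ∑ T ∈ S.powerset.filter (fun T => a ∈ T),
          ∑ b ∈ S, (if IsMaxOf r b T then wgtAOM π r η b T S else 0) := by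
        refine Finset.sum_congr rfl fun T hT => ?_
        exact mu_eq_sumAOM (Finset.mem_powerset.1 (Finset.mem_filter.1 hT).1)
    _ = ∑ b ∈ S, ∑ T ∈ S.powerset.filter (fun T => a ∈ T),
          (if IsMaxOf r b T then wgtAOM π r η b T S else 0) := Finset.sum_comm
    _ = ∑ b ∈ S, ((if b = a then π a S else 0) +
          (if r b a then π b S * tcoefAOM π r η a S else 0)) := by
        refine Finset.sum_congr rfl fun b hb => ?_
        rcases eq_or_ne b a with rfl | hba
        · rw [sum_wgt_selfAOM hr ha]
          simp [hr.irrefl b]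
        · by_cases hrba : r b a
          · rw [sum_wgt_memAOM hr hb ha hrba]
            simp [hba, hrba]
          · rw [sum_wgt_noneAOM hrba hba]
            simp [hba, hrba]
    _ = π a S + (∑ b ∈ S.filter (fun b => r b a), π b S) * tcoefAOM π r η a S := by
        rw [Finset.sum_add_distrib, Finset.sum_ite_eq' S a (fun _ => π a S), if_pos ha]
        congr 1
        rw [← Finset.sum_filter, Finset.sum_mul]
    _ = phiAOM π r η a S := by
        have hsplit := piUpper_splitAOM (π := π) hr ha
        have hspec := tcoef_specAOM (η := η) hπ hAC ha
        have : (∑ b ∈ S.filter (fun b => r b a), π b S) = piUpper π r a S - π a S := by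
          linarith
        rw [this]
        linarith [hspec, mul_comm (tcoefAOM π r η a S) (piUpper π r a S - π a S)]

lemma mu_isAttentionRuleAOM (hπ : IsChoiceRule π) (hr : IsStrictTotalOrder α r)
    (hAC : SatisfiesAC π r) : IsAttentionRule (muAOM π r η) := by
  intro S hS
  refine ⟨fun T hT hTS => mu_nonnegAOM hπ hr hAC hT hTS, ?_, mu_totalAOM hπ hr hS⟩
  intro T hT
  by_cases hTS : T ⊆ S
  · have : T = ∅ := by
      rcases T.eq_empty_or_nonempty with h | h
      · exact h
      · exact absurd ⟨h, hTS⟩ hT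
    rw [this, mu_emptyAOM]
  · unfold muAOM
    rw [if_neg hTS]
lemma mu_pair_botAOM (hr : IsStrictTotalOrder α r) {a b : α} (hab : r a b) :
    muAOM π r η {b} {a, b} = π b {a, b} := by
  have hmax : IsMaxOf r b {b} :=
    ⟨Finset.mem_singleton_self b, fun c hc hne => absurd (Finset.mem_singleton.1 hc) hne⟩
  rw [mu_of_maxAOM hr (by intro x hx; simp at hx; simp [hx]) hmax]
  unfold wgtAOM
  have hL : ({a, b} : Finset α).filter (fun c => r b c) = ∅ := by
    ext c
    simp only [Finset.mem_filter, Finset.mem_insert, Finset.mem_singleton,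
      Finset.notMem_empty, iff_false, not_and]
    rintro (rfl | rfl)
    · exact fun h => asymmAOM hr hab h
    · exact hr.irrefl _
  rw [hL, Finset.prod_empty, mul_one]

lemma mu_pair_topAOM (hπ : IsChoiceRule π) (hr : IsStrictTotalOrder α r)
    (hAC : SatisfiesAC π r) (hη0 : 0 ≤ η) {a b : α} (hne : a ≠ b) (hab : r a b) :
    muAOM π r η {a} {a, b} ≤ η := by
  set S : Finset α := {a, b} with hSdef
  have hS : S.Nonempty := ⟨a, by simp [hSdef]⟩
  have h1 := mu_totalAOM (π := π) (r := r) (η := η) hπ hr hS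
  have hsplit := Finset.sum_filter_add_sum_filter_not
    (S.powerset.filter (fun T => T.Nonempty)) (fun T => b ∈ T) (fun T => muAOM π r η T S)
  have e1 : (S.powerset.filter (fun T => T.Nonempty)).filter (fun T => b ∈ T)
      = S.powerset.filter (fun T => b ∈ T) := by
    ext T
    simp only [Finset.mem_filter, Finset.mem_powerset]
    constructor
    · rintro ⟨⟨h1', _⟩, h3⟩; exact ⟨h1', h3⟩
    · rintro ⟨h1', h3⟩; exact ⟨⟨h1', ⟨b, h3⟩⟩, h3⟩
  have e2 : (S.powerset.filter (fun T => T.Nonempty)).filter (fun T => ¬ b ∈ T)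
      = {({a} : Finset α)} := by
    ext T
    simp only [Finset.mem_filter, Finset.mem_powerset, Finset.mem_singleton]
    constructor
    · rintro ⟨⟨hsub, hne'⟩, hb⟩
      refine Finset.Subset.antisymm ?_ ?_
      · intro x hx
        rcases Finset.mem_insert.1 (hsub hx) with rfl | hx2
        · simp
        · rw [Finset.mem_singleton.1 hx2] at hx
          exact absurd hx hb
      · obtain ⟨x, hx⟩ := hne'
        rcases Finset.mem_insert.1 (hsub hx) with rfl | hx2
        · exact Finset.singleton_subset_iff.2 hx
        · rw [Finset.mem_singleton.1 hx2] at hx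
          exact absurd hx hb
    · rintro rfl
      exact ⟨⟨by simp [hSdef], ⟨a, by simp⟩⟩, by simp [Ne.symm hne]⟩
  have hkey : attFreq (muAOM π r η) b S + muAOM π r η {a} S = 1 := by
    rw [← h1, ← hsplit]
    congr 1
    · unfold attFreq
      rw [e1]
    · rw [e2, Finset.sum_singleton]
  have hbS : b ∈ S := by simp [hSdef]
  rw [attFreq_muAOM hπ hr hAC hbS] at hkey
  have hcard : S.card = 2 := Finset.card_pair hne
  have hup : piUpper π r b S = 1 := by
    unfold piUpper
    have hfe : S.filter (fun c => r c b ∨ c = b) = S := by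
      refine Finset.filter_eq_self.2 fun c hc => ?_
      rcases Finset.mem_insert.1 hc with rfl | hc2
      · exact Or.inl hab
      · exact Or.inr (Finset.mem_singleton.1 hc2)
    rw [hfe]
    exact (hπ S hS).2.2
  have hphi : 1 - η ≤ phiAOM π r η b S := by
    unfold phiAOM
    rw [if_pos (by rw [hcard])]
    exact le_min (by rw [hup]; linarith) (le_max_right _ _)
  linarith
end AuxAOM

/-- characterization with attentive at binaries. -/
theorem AOM_attentive_at_binaries_iff {α : Type*} [Fintype α] [DecidableEq α]
    (π : α → Finset α → ℝ) (r : α → α → Prop)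
    (hπ : IsChoiceRule π) (hr : IsStrictTotalOrder α r)
    (η : ℝ) (hη0 : 0 ≤ η) (hη1 : η ≤ 1) :
    (∃ μ : Finset α → Finset α → ℝ,
        AttentionOverload μ ∧ Represents r μ π ∧
        ∀ a b : α, a ≠ b → μ {a} {a, b} ≤ η ∧ μ {b} {a, b} ≤ η)
    ↔ (SatisfiesAC π r ∧ ∀ a b : α, a ≠ b → η < π a {a, b} → r a b) := by
  constructor
  · rintro ⟨μ, hov, ⟨hatt, hrep⟩, hbin⟩
    have hμ0 : ∀ (T U : Finset α), U.Nonempty → 0 ≤ μ T U := by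
      intro T U hU
      by_cases h : T.Nonempty ∧ T ⊆ U
      · exact (hatt U hU).1 T h.1 h.2
      · exact le_of_eq ((hatt U hU).2.1 T h).symm
    constructor
    · -- AC
      intro a T S haT hTS
      have hS : S.Nonempty := ⟨a, hTS haT⟩
      have hT : T.Nonempty := ⟨a, haT⟩
      have step1 : π a S ≤ attFreq μ a S := by
        rw [hrep S hS a (hTS haT)]
        unfold attFreq
        rw [Finset.sum_filter]
        refine Finset.sum_le_sum fun T' _ => ?_
        by_cases hm : IsMaxOf r a T'
        · rw [if_pos hm, if_pos hm.1]
        · rw [if_neg hm]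
          split
          · exact hμ0 T' S hS
          · exact le_refl 0
      have step2 : attFreq μ a S ≤ attFreq μ a T := hov a T S haT hTS
      have step3 : attFreq μ a T ≤ piUpper π r a T := by
        unfold piUpper attFreq
        rw [Finset.sum_filter]
        have hrw : ∀ b ∈ T.filter (fun b => r b a ∨ b = a),
            π b T = ∑ T' ∈ T.powerset, (if IsMaxOf r b T' then μ T' T else 0) :=
          fun b hb => hrep T hT b (Finset.mem_filter.1 hb).1
        rw [Finset.sum_congr rfl hrw, Finset.sum_comm]
        refine Finset.sum_le_sum fun T' hT' => ?_
        by_cases haT' : a ∈ T'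
        · rw [if_pos haT']
          obtain ⟨b0, hb0⟩ := exists_maxAOM hr ⟨a, haT'⟩
          have hb0T : b0 ∈ T := Finset.mem_powerset.1 hT' hb0.1
          have hb0P : r b0 a ∨ b0 = a := by
            rcases eq_or_ne b0 a with rfl | hne
            · exact Or.inr rfl
            · exact Or.inl (hb0.2 a haT' (Ne.symm hne))
          calc μ T' T = (if IsMaxOf r b0 T' then μ T' T else 0) := (if_pos hb0).symm
            _ ≤ ∑ b ∈ T.filter (fun b => r b a ∨ b = a),
                  (if IsMaxOf r b T' then μ T' T else 0) := by
                refine Finset.single_le_sum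
                  (f := fun b => if IsMaxOf r b T' then μ T' T else 0)
                  (fun b _ => ?_) (Finset.mem_filter.2 ⟨hb0T, hb0P⟩)
                show 0 ≤ (if IsMaxOf r b T' then μ T' T else 0)
                split
                · exact hμ0 T' T hT
                · exact le_refl 0
        · rw [if_neg haT']
          refine Finset.sum_nonneg fun b _ => ?_
          split
          · exact hμ0 T' T hT
          · exact le_refl 0
      linarith
    · -- constrained revealed preference
      intro a b hab hlt
      rcases (or_iff_not_imp_left.2 fun h1 => or_iff_not_imp_right.2 fun h2 => hr.trichotomous a b h1 h2 : r a b ∨ a = b ∨ r b a) with h | h | h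
      · exact h
      · exact absurd h hab
      · exfalso
        have hS : ({a, b} : Finset α).Nonempty := ⟨a, by simp⟩
        have heq : π a {a, b} = μ {a} {a, b} := by
          rw [hrep {a, b} hS a (by simp)]
          have h1 : ∑ T' ∈ ({a, b} : Finset α).powerset,
              (if IsMaxOf r a T' then μ T' {a, b} else 0)
                = (if IsMaxOf r a ({a} : Finset α) then μ {a} {a, b} else 0) := by
            refine Finset.sum_eq_single_of_mem ({a} : Finset α)
              (Finset.mem_powerset.2 (by intro x hx; simp at hx; simp [hx])) ?_
            intro T' hT' hne
            rw [if_neg]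
            intro hm
            apply hne
            have hsub : T' ⊆ {a, b} := Finset.mem_powerset.1 hT'
            have hbT' : b ∉ T' := fun hbT' => asymmAOM hr (hm.2 b hbT' (Ne.symm hab)) h
            refine Finset.Subset.antisymm ?_ (Finset.singleton_subset_iff.2 hm.1)
            intro x hx
            rcases Finset.mem_insert.1 (hsub hx) with rfl | hx2
            · simp
            · rw [Finset.mem_singleton.1 hx2] at hx
              exact absurd hx hbT'
          rw [h1, if_pos ⟨Finset.mem_singleton_self a,
            fun c hc hne => absurd (Finset.mem_singleton.1 hc) hne⟩]
        rw [heq] at hlt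
        exact absurd hlt (not_lt.2 (hbin a b hab).1)
  · rintro ⟨hAC, hRP⟩
    refine ⟨muAOM π r η, ?_, ⟨mu_isAttentionRuleAOM hπ hr hAC, ?_⟩, ?_⟩
    · intro a T S haT hTS
      rw [attFreq_muAOM hπ hr hAC (hTS haT), attFreq_muAOM hπ hr hAC haT]
      exact phi_monoAOM hπ hAC haT hTS
    · intro S hS a ha
      exact (mu_repAOM hr ha).symm
    · intro a b hab
      rcases (or_iff_not_imp_left.2 fun h1 => or_iff_not_imp_right.2 fun h2 => hr.trichotomous a b h1 h2 : r a b ∨ a = b ∨ r b a) with h | h | h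
      · refine ⟨mu_pair_topAOM hπ hr hAC hη0 hab h, ?_⟩
        rw [mu_pair_botAOM hr h]
        by_contra hc
        push_neg at hc
        have := hRP b a (Ne.symm hab) (by rwa [Finset.pair_comm b a])
        exact asymmAOM hr h this
      · exact absurd h hab
      · have hpc : ({a, b} : Finset α) = {b, a} := Finset.pair_comm a b
        constructor
        · rw [hpc, mu_pair_botAOM hr h]
          by_contra hc
          push_neg at hc
          have := hRP a b hab (by rw [hpc]; exact hc)
          exact asymmAOM hr h this
        · rw [hpc]
          exact mu_pair_topAOM hπ hr hAC hη0 (Ne.symm hab) h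
end

section
/- (Key LP inequality, Lemma A.4 of the paper.) For every integer n ≥ 3, let vectors c = (c_2, ..., c_{2n-2}) and z = (z_2, ..., z_{2n-2}) have nonnegative real entries. Suppose c satisfies, for every j = 2, 3, ..., n: Σ_{i=2}^{n+1-j} c_i + Σ_{i=n+3-j}^{n} c_i + Σ_{i=n+1}^{n-2+j} c_i ≥ 1 (empty sums are zero). Suppose z satisfies, for every nonempty P ⊆ {2, 3, ..., n-1} with maximum element P̄ and every integer j with P̄+1 ≤ j ≤ 2n−P̄: Σ_{i∈P} z_i + z_j ≥ |P|. Then Σ_{i=2}^{2n-2} c_i z_i ≥ 1. -/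
open Finset

/-- key LP inequality (Lemma A.4). -/
theorem lp_key_inequality (n : ℕ) (hn : 3 ≤ n) (c z : ℕ → ℝ)
    (hc0 : ∀ i, 2 ≤ i → i ≤ 2 * n - 2 → 0 ≤ c i)
    (hz0 : ∀ i, 2 ≤ i → i ≤ 2 * n - 2 → 0 ≤ z i)
    (hc : ∀ j, 2 ≤ j → j ≤ n →
      (∑ i ∈ Finset.Icc 2 (n + 1 - j), c i) + (∑ i ∈ Finset.Icc (n + 3 - j) n, c i)
        + (∑ i ∈ Finset.Icc (n + 1) (n - 2 + j), c i) ≥ 1)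
    (hz : ∀ (P : Finset ℕ) (hP : P.Nonempty), P ⊆ Finset.Icc 2 (n - 1) →
      ∀ j, P.max' hP + 1 ≤ j → j ≤ 2 * n - P.max' hP →
        (∑ i ∈ P, z i) + z j ≥ (P.card : ℝ)) :
    ∑ i ∈ Finset.Icc 2 (2 * n - 2), c i * z i ≥ 1 := by
  set w : ℕ → ℝ := fun i => max (1 - z i) 0 with hwdef
  have hw0 : ∀ i, 0 ≤ w i := fun i => le_max_right _ _
  set S : ℕ → ℝ := fun m => ∑ i ∈ Icc 2 m, w i with hSdef
  have K : ∀ m j, 2 ≤ m → m ≤ n - 1 → m + 1 ≤ j → j ≤ 2*n - m → S m ≤ z j := by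
    intro m j hm2 hmn hj1 hj2
    by_cases hP : ((Icc 2 m).filter (fun i => z i < 1)).Nonempty
    · set P := (Icc 2 m).filter (fun i => z i < 1) with hPdef
      have hPsub : P ⊆ Icc 2 (n-1) := by
        intro i hi
        rw [hPdef, mem_filter, mem_Icc] at hi
        rw [mem_Icc]
        omega
      have hmaxmem : P.max' hP ∈ Icc 2 m ∧ z (P.max' hP) < 1 := mem_filter.mp (P.max'_mem hP)
      have hmax := mem_Icc.mp hmaxmem.1
      have h := hz P hP hPsub j (by omega) (by omega)
      have hSP : S m = (P.card : ℝ) - ∑ i ∈ P, z i := by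
        rw [hSdef]
        simp only []
        rw [← Finset.sum_filter_add_sum_filter_not (Icc 2 m) (fun i => z i < 1) w]
        have h1 : ∑ i ∈ (Icc 2 m).filter (fun i => z i < 1), w i = ∑ i ∈ P, (1 - z i) :=
          Finset.sum_congr rfl (fun i hi => by
            have : z i < 1 := (mem_filter.mp hi).2
            rw [hwdef]; simp only []
            rw [max_eq_left (by linarith)])
        have h2 : ∑ i ∈ (Icc 2 m).filter (fun i => ¬ z i < 1), w i = 0 :=
          Finset.sum_eq_zero (fun i hi => by
            have : ¬ z i < 1 := (mem_filter.mp hi).2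
            rw [hwdef]; simp only []
            rw [max_eq_right (by linarith)])
        rw [h1, h2, Finset.sum_sub_distrib, Finset.sum_const, nsmul_eq_mul, mul_one, add_zero]
      rw [hSP]
      linarith [h]
    · have hS0 : S m = 0 := Finset.sum_eq_zero (fun i hi => by
        have hzi : ¬ z i < 1 := fun hlt => hP ⟨i, mem_filter.mpr ⟨hi, hlt⟩⟩
        rw [hwdef]; simp only []
        rw [max_eq_right (by push_neg at hzi; linarith)])
      rw [hS0]
      exact hz0 j (by omega) (by omega)
  -- dual weights
  have Smono : ∀ a b : ℕ, a ≤ b → S a ≤ S b := by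
    intro a b hab
    exact Finset.sum_le_sum_of_subset_of_nonneg (Finset.Icc_subset_Icc_right hab)
      (fun i _ _ => hw0 i)
  have hS1 : S 1 = 0 := by
    rw [hSdef]; simp only []
    rw [Finset.Icc_eq_empty (by omega), Finset.sum_empty]
  have hziS : ∀ i, 2 ≤ i → i ≤ n → S (i-1) ≤ z i := by
    intro i hi2 hin
    rcases Nat.eq_or_lt_of_le hi2 with h2 | h2
    · rw [← h2]; norm_num [hS1]
      exact hz0 2 le_rfl (by omega)
    · exact K (i-1) i (by omega) (by omega) (by omega) (by omega)
  set x : ℕ → ℝ := fun k => if k = n then 1 - min (S (n-1)) 1 else min (S k) 1 - min (S (k-1)) 1 with hxdef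
  have F1 : ∀ k, 2 ≤ k → k ≤ n → 0 ≤ x k := by
    intro k hk2 hkn
    rw [hxdef]; simp only []
    by_cases hk : k = n
    · rw [if_pos hk]
      have := min_le_right (S (n-1)) 1
      linarith
    · rw [if_neg hk]
      have := min_le_min (Smono (k-1) k (by omega)) (le_refl (1:ℝ))
      linarith
  have F2 : ∀ m, 1 ≤ m → m ≤ n - 1 → ∑ k ∈ Icc 2 m, x k = min (S m) 1 := by
    intro m hm1
    induction m, hm1 using Nat.le_induction with
    | base =>
      intro _
      rw [Finset.Icc_eq_empty (by omega), Finset.sum_empty, hS1]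
      norm_num
    | succ m hm ih =>
      intro hmn
      rw [Finset.sum_Icc_succ_top (by omega : 2 ≤ m + 1), ih (by omega)]
      have hx : x (m+1) = min (S (m+1)) 1 - min (S m) 1 := by
        rw [hxdef]; simp only []
        rw [if_neg (by omega)]
        norm_num
      rw [hx]; ring
  have F3 : ∑ k ∈ Icc 2 n, x k = 1 := by
    have h1 : ∑ k ∈ Icc 2 ((n-1)+1), x k = ∑ k ∈ Icc 2 (n-1), x k + x ((n-1)+1) :=
      Finset.sum_Icc_succ_top (by omega) x
    rw [show (n-1)+1 = n by omega] at h1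
    rw [h1, F2 (n-1) (by omega) le_rfl]
    have hx : x n = 1 - min (S (n-1)) 1 := by rw [hxdef]; simp
    rw [hx]; ring
  have F4 : ∀ i, 2 ≤ i → i ≤ n → 1 - x i ≤ z i := by
    intro i hi2 hin
    have hzi := hziS i hi2 hin
    by_cases hi : i = n
    · have hx : x i = 1 - min (S (n-1)) 1 := by rw [hxdef]; simp only []; rw [if_pos hi]
      have := min_le_left (S (n-1)) 1
      rw [hx]
      rw [hi] at hzi ⊢
      linarith
    · have hx : x i = min (S i) 1 - min (S (i-1)) 1 := by
        rw [hxdef]; simp only []; rw [if_neg hi]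
      have hmin1 := min_le_left (S (i-1)) (1:ℝ)
      by_cases hS : S i ≤ 1
      · have e1 : min (S i) 1 = S i := min_eq_left hS
        have e2 : min (S (i-1)) 1 = S (i-1) := min_eq_left (le_trans (Smono (i-1) i (by omega)) hS)
        have hw : S i = S (i-1) + w i := by
          have h := Finset.sum_Icc_succ_top (show 2 ≤ (i-1)+1 by omega) w
          rw [show (i-1)+1 = i by omega] at h
          exact h
        have hwi : 1 - z i ≤ w i := le_max_left _ _
        rw [hx, e1, e2]
        linarith
      · have e1 : min (S i) 1 = 1 := min_eq_right (by linarith)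
        rw [hx, e1]
        linarith
  have F5 : ∀ i, n+1 ≤ i → i ≤ 2*n-2 → min (S (2*n - i)) 1 ≤ z i := by
    intro i hi1 hi2
    exact le_trans (min_le_left _ _)
      (K (2*n-i) i (by omega) (by omega) (by omega) (by omega))
  -- constraints in erased form
  have T : ∀ k, 2 ≤ k → k ≤ n → (1:ℝ) ≤ ∑ i ∈ (Icc 2 (2*n - k)).erase k, c i := by
    intro k hk2 hkn
    have h := hc (n+2-k) (by omega) (by omega)
    rw [show n + 1 - (n+2-k) = k - 1 by omega, show n + 3 - (n+2-k) = k + 1 by omega,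
      show n - 2 + (n+2-k) = 2*n - k by omega] at h
    have d1 : Disjoint (Icc (k+1) n) (Icc (n+1) (2*n-k)) := by
      rw [Finset.disjoint_left]
      intro a ha hb
      rw [mem_Icc] at ha hb
      omega
    have d2 : Disjoint (Icc 2 (k-1)) (Icc (k+1) n ∪ Icc (n+1) (2*n-k)) := by
      rw [Finset.disjoint_left]
      intro a ha hb
      rw [mem_Icc] at ha
      rw [mem_union, mem_Icc, mem_Icc] at hb
      omega
    have hset : (Icc 2 (2*n - k)).erase k = Icc 2 (k-1) ∪ (Icc (k+1) n ∪ Icc (n+1) (2*n-k)) := by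
      ext i
      simp only [mem_erase, mem_Icc, mem_union]
      omega
    rw [hset, Finset.sum_union d2, Finset.sum_union d1]
    linarith
  rw [ge_iff_le]
  calc (1:ℝ) = ∑ k ∈ Icc 2 n, x k := F3.symm
    _ ≤ ∑ k ∈ Icc 2 n, x k * (∑ i ∈ (Icc 2 (2*n-k)).erase k, c i) := by
        apply Finset.sum_le_sum
        intro k hk
        rw [mem_Icc] at hk
        exact le_mul_of_one_le_right (F1 k hk.1 hk.2) (T k hk.1 hk.2)
    _ = ∑ k ∈ Icc 2 n, ∑ i ∈ Icc 2 (2*n-2), (if i ∈ (Icc 2 (2*n-k)).erase k then x k else 0) * c i := by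
        apply Finset.sum_congr rfl
        intro k hk
        rw [mem_Icc] at hk
        have hsub : (Icc 2 (2*n-k)).erase k ⊆ Icc 2 (2*n-2) := by
          intro i hi
          rw [mem_erase, mem_Icc] at hi
          rw [mem_Icc]
          omega
        have h1 : ∑ i ∈ Icc 2 (2*n-2), (if i ∈ (Icc 2 (2*n-k)).erase k then c i else 0)
            = ∑ i ∈ (Icc 2 (2*n-k)).erase k, c i := by
          rw [Finset.sum_ite_mem, Finset.inter_eq_right.mpr hsub]
        rw [← h1, Finset.mul_sum]
        apply Finset.sum_congr rfl
        intro i _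
        split_ifs <;> ring
    _ = ∑ i ∈ Icc 2 (2*n-2), (∑ k ∈ Icc 2 n, if i ∈ (Icc 2 (2*n-k)).erase k then x k else 0) * c i := by
        rw [Finset.sum_comm]
        exact Finset.sum_congr rfl (fun i _ => (Finset.sum_mul _ _ _).symm)
    _ ≤ ∑ i ∈ Icc 2 (2*n-2), c i * z i := by
        apply Finset.sum_le_sum
        intro i hi
        rw [mem_Icc] at hi
        have hci := hc0 i hi.1 hi.2
        have hcoef : (∑ k ∈ Icc 2 n, if i ∈ (Icc 2 (2*n-k)).erase k then x k else 0) ≤ z i := by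
          by_cases hin : i ≤ n
          · have e : ∀ k ∈ Icc 2 n,
                (if i ∈ (Icc 2 (2*n-k)).erase k then x k else 0) = x k - (if k = i then x k else 0) := by
              intro k hk
              rw [mem_Icc] at hk
              by_cases hki : k = i
              · rw [if_pos hki, if_neg (by simp only [mem_erase, mem_Icc]; omega)]
                ring
              · rw [if_neg hki, if_pos (by simp only [mem_erase, mem_Icc]; omega)]
                ring
            rw [Finset.sum_congr rfl e, Finset.sum_sub_distrib, Finset.sum_ite_eq' (Icc 2 n) i x,
              if_pos (mem_Icc.mpr ⟨hi.1, hin⟩), F3]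
            exact F4 i hi.1 hin
          · have e : ∀ k ∈ Icc 2 n,
                (if i ∈ (Icc 2 (2*n-k)).erase k then x k else 0) = (if k ∈ Icc 2 (2*n-i) then x k else 0) := by
              intro k hk
              rw [mem_Icc] at hk
              by_cases hk2 : k ≤ 2*n - i
              · rw [if_pos (by simp only [mem_erase, mem_Icc]; omega),
                  if_pos (by simp only [mem_Icc]; omega)]
              · rw [if_neg (by simp only [mem_erase, mem_Icc]; omega),
                  if_neg (by simp only [mem_Icc]; omega)]
            rw [Finset.sum_congr rfl e, Finset.sum_ite_mem,
              Finset.inter_eq_right.mpr (Finset.Icc_subset_Icc_right (by omega)),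
              F2 (2*n-i) (by omega) (by omega)]
            exact F5 i (by omega) hi.2
        calc (∑ k ∈ Icc 2 n, if i ∈ (Icc 2 (2*n-k)).erase k then x k else 0) * c i
            ≤ z i * c i := mul_le_mul_of_nonneg_right hcoef hci
          _ = c i * z i := mul_comm _ _
end
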